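/- arXiv:2505.05676 — 5 statements merged into one kernel-verified Lean document; each statement's English description precedes it below -/
import Mathlib

section
/- Let s, φ ∈ C¹_FF([0,1]) and let g₁, g₂ ∈ 𝒢 be such that the warping path γ*(t) = (g₁(t), g₂(t)) satisfies ∫₀¹ |s(g₁(t)) − φ(g₂(t))| (g₁'(t)+g₂'(t)) dt = 0 (in particular γ* attains the infimum CDTW(s,φ) = 0). Then s∘g₁ = φ∘g₂ on [0,1]. -/
open Set MeasureTheory Filter Topology


lemma my_deriv_nonneg {g : ℝ → ℝ} (hm : MonotoneOn g (Set.Icc 0 1)) {x : ℝ}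
    (hx : x ∈ Set.Ioo (0:ℝ) 1) (hd : DifferentiableAt ℝ g x) : 0 ≤ deriv g x := by
  have h1 : HasDerivWithinAt g (deriv g x) (Set.Ioi x) x :=
    hd.hasDerivAt.hasDerivWithinAt
  rw [hasDerivWithinAt_iff_tendsto_slope] at h1
  have hne : Set.Ioi x \ {x} = Set.Ioi x := by
    apply Set.diff_singleton_eq_self; simp
  rw [hne] at h1
  refine ge_of_tendsto h1 ?_
  have hev : ∀ᶠ y in 𝓝[>] x, y < 1 :=
    eventually_nhdsWithin_of_eventually_nhds (eventually_lt_nhds hx.2)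
  filter_upwards [self_mem_nhdsWithin, hev] with y hy h1y
  rw [slope_def_field]
  have hxy : x < y := hy
  have hyI : y ∈ Set.Icc (0:ℝ) 1 := ⟨(hx.1.trans hxy).le, h1y.le⟩
  have hxI : x ∈ Set.Icc (0:ℝ) 1 := ⟨hx.1.le, hx.2.le⟩
  exact div_nonneg (sub_nonneg.2 (hm hxI hyI hxy.le)) (sub_nonneg.2 hxy.le)

lemma my_integrableOn_deriv {g : ℝ → ℝ} (hm : MonotoneOn g (Set.Icc 0 1)) (S : Finset ℝ) :
    ∀ a b : ℝ, 0 ≤ a → b ≤ 1 → ContinuousOn g (Set.Icc a b) →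
    (∀ x ∈ Set.Ioo a b \ (S : Set ℝ), DifferentiableAt ℝ g x) →
    MeasureTheory.IntegrableOn (deriv g) (Set.Ioc a b) := by
  induction S using Finset.induction_on with
  | empty =>
    intro a b ha hb hcont hd
    have hd' : ∀ x ∈ Set.Ioo a b, DifferentiableAt ℝ g x := by
      intro x hx; exact hd x (by simpa using hx)
    refine intervalIntegral.integrableOn_deriv_of_nonneg hcont
      (fun x hx => (hd' x hx).hasDerivAt) (fun x hx => ?_)
    exact my_deriv_nonneg hm ⟨lt_of_le_of_lt ha hx.1, lt_of_lt_of_le hx.2 hb⟩ (hd' x hx)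
  | @insert c S' hc ih =>
    intro a b ha hb hcont hd
    by_cases hmem : c ∈ Set.Ioo a b
    · have h1 : MeasureTheory.IntegrableOn (deriv g) (Set.Ioc a c) := by
        refine ih a c ha (hmem.2.le.trans hb) (hcont.mono (Set.Icc_subset_Icc le_rfl hmem.2.le))
          (fun x hx => hd x ⟨⟨hx.1.1, hx.1.2.trans hmem.2⟩, ?_⟩)
        simp only [Finset.coe_insert, Set.mem_insert_iff]
        push_neg
        exact ⟨ne_of_lt hx.1.2, hx.2⟩
      have h2 : MeasureTheory.IntegrableOn (deriv g) (Set.Ioc c b) := by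
        refine ih c b (ha.trans hmem.1.le) hb (hcont.mono (Set.Icc_subset_Icc hmem.1.le le_rfl))
          (fun x hx => hd x ⟨⟨hmem.1.trans hx.1.1, hx.1.2⟩, ?_⟩)
        simp only [Finset.coe_insert, Set.mem_insert_iff]
        push_neg
        exact ⟨(ne_of_gt hx.1.1), hx.2⟩
      have : Set.Ioc a c ∪ Set.Ioc c b = Set.Ioc a b :=
        Set.Ioc_union_Ioc_eq_Ioc hmem.1.le hmem.2.le
      rw [← this]
      exact h1.union h2
    · refine ih a b ha hb hcont (fun x hx => hd x ⟨hx.1, ?_⟩)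
      simp only [Finset.coe_insert, Set.mem_insert_iff]
      push_neg
      refine ⟨?_, hx.2⟩
      rintro rfl; exact hmem hx.1

lemma my_const_of_ae_deriv_zero (g : ℝ → ℝ) (S : Finset ℝ) :
    ∀ a b : ℝ, a ≤ b → ContinuousOn g (Set.Icc a b) →
    (∀ x ∈ Set.Ioo a b \ (S : Set ℝ), DifferentiableAt ℝ g x) →
    MeasureTheory.IntegrableOn (deriv g) (Set.Ioc a b) →
    (∀ᵐ x ∂(MeasureTheory.volume.restrict (Set.Ioc a b)), deriv g x = 0) →
    g b = g a := by
  induction S using Finset.induction_on with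
  | empty =>
    intro a b hab hcont hd hint hae
    have hd' : ∀ x ∈ Set.Ioo a b, HasDerivAt g (deriv g x) x := by
      intro x hx; exact (hd x (by simpa using hx)).hasDerivAt
    have hii : IntervalIntegrable (deriv g) MeasureTheory.volume a b := by
      rw [intervalIntegrable_iff_integrableOn_Ioc_of_le hab]; exact hint
    have h2 := intervalIntegral.integral_eq_sub_of_hasDerivAt_of_le hab hcont hd' hii
    have h0 : (∫ y in a..b, deriv g y) = 0 := by
      rw [intervalIntegral.integral_of_le hab]
      exact MeasureTheory.integral_eq_zero_of_ae hae
    rw [h0] at h2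
    linarith [h2]
  | @insert c S' hc ih =>
    intro a b hab hcont hd hint hae
    by_cases hmem : c ∈ Set.Ioo a b
    · have h1 : g c = g a := by
        refine ih a c hmem.1.le (hcont.mono (Set.Icc_subset_Icc le_rfl hmem.2.le))
          (fun x hx => hd x ⟨⟨hx.1.1, hx.1.2.trans hmem.2⟩, ?_⟩)
          (hint.mono_set (Set.Ioc_subset_Ioc le_rfl hmem.2.le))
          (MeasureTheory.ae_restrict_of_ae_restrict_of_subset
            (Set.Ioc_subset_Ioc le_rfl hmem.2.le) hae)
        simp only [Finset.coe_insert, Set.mem_insert_iff]; push_neg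
        exact ⟨ne_of_lt hx.1.2, hx.2⟩
      have h2 : g b = g c := by
        refine ih c b hmem.2.le (hcont.mono (Set.Icc_subset_Icc hmem.1.le le_rfl))
          (fun x hx => hd x ⟨⟨hmem.1.trans hx.1.1, hx.1.2⟩, ?_⟩)
          (hint.mono_set (Set.Ioc_subset_Ioc hmem.1.le le_rfl))
          (MeasureTheory.ae_restrict_of_ae_restrict_of_subset
            (Set.Ioc_subset_Ioc hmem.1.le le_rfl) hae)
        simp only [Finset.coe_insert, Set.mem_insert_iff]; push_neg
        exact ⟨ne_of_gt hx.1.1, hx.2⟩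
      rw [h2, h1]
    · refine ih a b hab hcont (fun x hx => hd x ⟨hx.1, ?_⟩) hint hae
      simp only [Finset.coe_insert, Set.mem_insert_iff]; push_neg
      refine ⟨?_, hx.2⟩
      rintro rfl; exact hmem hx.1

lemma my_main (s φ g₁ g₂ : ℝ → ℝ)
    (hs : ContinuousOn s (Set.Icc 0 1)) (hφ : ContinuousOn φ (Set.Icc 0 1))
    (hg₁c : ContinuousOn g₁ (Set.Icc 0 1)) (hg₂c : ContinuousOn g₂ (Set.Icc 0 1))
    (hm₁ : MonotoneOn g₁ (Set.Icc 0 1)) (hm₂ : MonotoneOn g₂ (Set.Icc 0 1))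
    (h₁0 : g₁ 0 = 0) (h₁1 : g₁ 1 = 1) (h₂0 : g₂ 0 = 0) (h₂1 : g₂ 1 = 1)
    (S₁ S₂ : Finset ℝ)
    (hd₁ : ∀ x ∈ Set.Icc (0:ℝ) 1 \ S₁, DifferentiableAt ℝ g₁ x)
    (hd₂ : ∀ x ∈ Set.Icc (0:ℝ) 1 \ S₂, DifferentiableAt ℝ g₂ x)
    (hzero : (∫ t in (0:ℝ)..1, |s (g₁ t) - φ (g₂ t)| * (deriv g₁ t + deriv g₂ t)) = 0) :
    ∀ t ∈ Set.Icc (0:ℝ) 1, s (g₁ t) = φ (g₂ t) := by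
  -- the mismatch function
  set h : ℝ → ℝ := fun t => |s (g₁ t) - φ (g₂ t)| with hh_def
  have hmap₁ : Set.MapsTo g₁ (Set.Icc 0 1) (Set.Icc 0 1) := by
    intro t ht
    constructor
    · rw [← h₁0]; exact hm₁ (Set.left_mem_Icc.2 zero_le_one) ht ht.1
    · rw [← h₁1]; exact hm₁ ht (Set.right_mem_Icc.2 zero_le_one) ht.2
  have hmap₂ : Set.MapsTo g₂ (Set.Icc 0 1) (Set.Icc 0 1) := by
    intro t ht
    constructor
    · rw [← h₂0]; exact hm₂ (Set.left_mem_Icc.2 zero_le_one) ht ht.1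
    · rw [← h₂1]; exact hm₂ ht (Set.right_mem_Icc.2 zero_le_one) ht.2
  have hhcont : ContinuousOn h (Set.Icc 0 1) :=
    ((hs.comp hg₁c hmap₁).sub (hφ.comp hg₂c hmap₂)).abs
  -- differentiability off S₁ on Ioo
  have hdiff₁ : ∀ x ∈ Set.Ioo (0:ℝ) 1 \ (S₁ : Set ℝ), DifferentiableAt ℝ g₁ x :=
    fun x hx => hd₁ x ⟨Set.Ioo_subset_Icc_self hx.1, hx.2⟩
  have hdiff₂ : ∀ x ∈ Set.Ioo (0:ℝ) 1 \ (S₂ : Set ℝ), DifferentiableAt ℝ g₂ x :=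
    fun x hx => hd₂ x ⟨Set.Ioo_subset_Icc_self hx.1, hx.2⟩
  -- integrability of the derivatives
  have hi₁ : IntegrableOn (deriv g₁) (Set.Ioc 0 1) :=
    my_integrableOn_deriv hm₁ S₁ 0 1 le_rfl le_rfl hg₁c hdiff₁
  have hi₂ : IntegrableOn (deriv g₂) (Set.Ioc 0 1) :=
    my_integrableOn_deriv hm₂ S₂ 0 1 le_rfl le_rfl hg₂c hdiff₂
  -- bound on h
  obtain ⟨M, hM⟩ := isCompact_Icc.exists_bound_of_continuousOn hhcont
  -- the integrand
  set F : ℝ → ℝ := fun t => h t * (deriv g₁ t + deriv g₂ t) with hF_def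
  have hFmeas : AEStronglyMeasurable F (volume.restrict (Set.Ioc 0 1)) := by
    apply AEStronglyMeasurable.mul
    · exact (hhcont.mono Set.Ioc_subset_Icc_self).aestronglyMeasurable measurableSet_Ioc
    · exact ((measurable_deriv g₁).add (measurable_deriv g₂)).aestronglyMeasurable
  have hFint : IntegrableOn F (Set.Ioc 0 1) := by
    refine Integrable.mono' (((hi₁.norm.add hi₂.norm).const_mul M)) hFmeas ?_
    rw [ae_restrict_iff' measurableSet_Ioc]
    refine Filter.Eventually.of_forall (fun t ht => ?_)
    have htI : t ∈ Set.Icc (0:ℝ) 1 := Set.Ioc_subset_Icc_self ht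
    have h1 : ‖F t‖ = h t * |deriv g₁ t + deriv g₂ t| := by
      rw [Real.norm_eq_abs, abs_mul, abs_abs]
    rw [h1]
    calc h t * |deriv g₁ t + deriv g₂ t| ≤ M * |deriv g₁ t + deriv g₂ t| := by
          apply mul_le_mul_of_nonneg_right _ (abs_nonneg _)
          have := hM t htI
          rw [Real.norm_eq_abs, abs_abs] at this
          exact this
      _ ≤ M * (‖deriv g₁ t‖ + ‖deriv g₂ t‖) := by
          apply mul_le_mul_of_nonneg_left (abs_add_le _ _)
          have h3 := hM t htI
          rw [Real.norm_eq_abs, abs_abs] at h3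
          exact (abs_nonneg _).trans h3
  -- the bad (measure zero) set
  have hbad : volume ((S₁ : Set ℝ) ∪ (S₂ : Set ℝ) ∪ {1}) = 0 := by
    apply measure_union_null
    apply measure_union_null
    · exact (S₁.finite_toSet).measure_zero _
    · exact (S₂.finite_toSet).measure_zero _
    · exact measure_singleton _
  have hgood : ∀ᵐ t ∂(volume.restrict (Set.Ioc 0 1)),
      t ∉ ((S₁ : Set ℝ) ∪ (S₂ : Set ℝ) ∪ {1}) :=
    ae_restrict_of_ae (measure_eq_zero_iff_ae_notMem.1 hbad)
  -- nonnegativity a.e.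
  have hFnonneg : 0 ≤ᵐ[volume.restrict (Set.Ioc 0 1)] F := by
    rw [Filter.EventuallyLE]
    filter_upwards [hgood, ae_restrict_mem measurableSet_Ioc] with t htb htI
    simp only [Set.mem_union, Set.mem_singleton_iff] at htb
    push_neg at htb
    have htoo : t ∈ Set.Ioo (0:ℝ) 1 := ⟨htI.1, lt_of_le_of_ne htI.2 htb.2⟩
    have hD1 : 0 ≤ deriv g₁ t := my_deriv_nonneg hm₁ htoo (hdiff₁ t ⟨htoo, htb.1.1⟩)
    have hD2 : 0 ≤ deriv g₂ t := my_deriv_nonneg hm₂ htoo (hdiff₂ t ⟨htoo, htb.1.2⟩)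
    exact mul_nonneg (abs_nonneg _) (add_nonneg hD1 hD2)
  -- F = 0 a.e.
  have hint0 : (∫ t in Set.Ioc (0:ℝ) 1, F t) = 0 := by
    rw [← intervalIntegral.integral_of_le zero_le_one]
    exact hzero
  have hF0 : F =ᵐ[volume.restrict (Set.Ioc 0 1)] 0 :=
    (integral_eq_zero_iff_of_nonneg_ae hFnonneg hFint).1 hint0
  -- main argument
  intro t₀ ht₀
  by_contra hne
  have ht₀pos : 0 < h t₀ := abs_pos.2 (sub_ne_zero.2 hne)
  -- sSup / sInf construction
  set Z : Set ℝ := insert 0 {t | t ∈ Set.Icc 0 t₀ ∧ h t = 0} with hZ_def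
  set W : Set ℝ := insert 1 {t | t ∈ Set.Icc t₀ 1 ∧ h t = 0} with hW_def
  have hZne : Z.Nonempty := ⟨0, Set.mem_insert _ _⟩
  have hWne : W.Nonempty := ⟨1, Set.mem_insert _ _⟩
  have hZbdd : BddAbove Z := by
    refine ⟨t₀, fun z hz => ?_⟩
    rcases hz with rfl | hz
    · exact ht₀.1
    · exact hz.1.2
  have hWbdd : BddBelow W := by
    refine ⟨t₀, fun z hz => ?_⟩
    rcases hz with rfl | hz
    · exact ht₀.2
    · exact hz.1.1
  have hZclosed : IsClosed Z := by
    have : Z = {0} ∪ (Set.Icc 0 t₀ ∩ h ⁻¹' {0}) := by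
      ext z; simp [hZ_def, Set.mem_insert_iff, and_comm]
    rw [this]
    exact isClosed_singleton.union
      (((hhcont.mono (Set.Icc_subset_Icc le_rfl ht₀.2)).preimage_isClosed_of_isClosed
        isClosed_Icc isClosed_singleton))
  have hWclosed : IsClosed W := by
    have : W = {1} ∪ (Set.Icc t₀ 1 ∩ h ⁻¹' {0}) := by
      ext z; simp [hW_def, Set.mem_insert_iff, and_comm]
    rw [this]
    exact isClosed_singleton.union
      (((hhcont.mono (Set.Icc_subset_Icc ht₀.1 le_rfl)).preimage_isClosed_of_isClosed
        isClosed_Icc isClosed_singleton))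
  set a : ℝ := sSup Z with ha_def
  set b : ℝ := sInf W with hb_def
  have haZ : a ∈ Z := hZclosed.csSup_mem hZne hZbdd
  have hbW : b ∈ W := hWclosed.csInf_mem hWne hWbdd
  have ha0 : 0 ≤ a := le_csSup hZbdd (Set.mem_insert _ _)
  have hb1 : b ≤ 1 := csInf_le hWbdd (Set.mem_insert _ _)
  have hat₀ : a ≤ t₀ := csSup_le hZne (fun z hz => by
    rcases hz with rfl | hz
    · exact ht₀.1
    · exact hz.1.2)
  have ht₀b : t₀ ≤ b := le_csInf hWne (fun z hz => by
    rcases hz with rfl | hz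
    · exact ht₀.2
    · exact hz.1.1)
  have hab : a ≤ b := hat₀.trans ht₀b
  have haI : a ∈ Set.Icc (0:ℝ) 1 := ⟨ha0, hab.trans hb1⟩
  have hbI : b ∈ Set.Icc (0:ℝ) 1 := ⟨ha0.trans hab, hb1⟩
  -- h is positive on Ioo a b
  have hpos : ∀ t ∈ Set.Ioo a b, 0 < h t := by
    intro t ht
    rcases le_or_gt t t₀ with hle | hlt
    · rcases eq_or_lt_of_le (abs_nonneg (s (g₁ t) - φ (g₂ t))) with heq | hlt'
      · exfalso
        have htZ : t ∈ Z := Set.mem_insert_iff.2 (Or.inr ⟨⟨ha0.trans ht.1.le, hle⟩, heq.symm⟩)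
        exact absurd (le_csSup hZbdd htZ) (not_le.2 ht.1)
      · exact hlt'
    · rcases eq_or_lt_of_le (abs_nonneg (s (g₁ t) - φ (g₂ t))) with heq | hlt'
      · exfalso
        have htW : t ∈ W := Set.mem_insert_iff.2 (Or.inr ⟨⟨hlt.le, ht.2.le.trans hb1⟩, heq.symm⟩)
        exact absurd (csInf_le hWbdd htW) (not_le.2 ht.2)
      · exact hlt'
  -- a.e., derivatives vanish on Ioc a b
  have hFab : F =ᵐ[volume.restrict (Set.Ioc a b)] 0 :=
    ae_restrict_of_ae_restrict_of_subset (Set.Ioc_subset_Ioc ha0 hb1) hF0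
  have hgoodab : ∀ᵐ t ∂(volume.restrict (Set.Ioc a b)),
      t ∉ ((S₁ : Set ℝ) ∪ (S₂ : Set ℝ) ∪ {b}) := by
    refine ae_restrict_of_ae (measure_eq_zero_iff_ae_notMem.1 ?_)
    apply measure_union_null
    apply measure_union_null
    · exact (S₁.finite_toSet).measure_zero _
    · exact (S₂.finite_toSet).measure_zero _
    · exact measure_singleton _
  have hderiv0 : ∀ᵐ t ∂(volume.restrict (Set.Ioc a b)),
      deriv g₁ t = 0 ∧ deriv g₂ t = 0 := by
    filter_upwards [hFab, hgoodab, ae_restrict_mem measurableSet_Ioc] with t hFt htb htI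
    simp only [Set.mem_union, Set.mem_singleton_iff] at htb
    push_neg at htb
    have htoo : t ∈ Set.Ioo a b := ⟨htI.1, lt_of_le_of_ne htI.2 htb.2⟩
    have htoo01 : t ∈ Set.Ioo (0:ℝ) 1 :=
      ⟨lt_of_le_of_lt ha0 htoo.1, lt_of_lt_of_le htoo.2 hb1⟩
    have hD1 : 0 ≤ deriv g₁ t := my_deriv_nonneg hm₁ htoo01 (hdiff₁ t ⟨htoo01, htb.1.1⟩)
    have hD2 : 0 ≤ deriv g₂ t := my_deriv_nonneg hm₂ htoo01 (hdiff₂ t ⟨htoo01, htb.1.2⟩)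
    have hht : 0 < h t := hpos t htoo
    have hsum : deriv g₁ t + deriv g₂ t = 0 := by
      by_contra hne'
      have : F t ≠ 0 := mul_ne_zero (ne_of_gt hht) hne'
      exact this hFt
    constructor
    · linarith
    · linarith
  -- g₁ and g₂ are constant on [a, b]
  have hconst₁ : g₁ b = g₁ a := by
    refine my_const_of_ae_deriv_zero g₁ S₁ a b hab
      (hg₁c.mono (Set.Icc_subset_Icc ha0 hb1))
      (fun x hx => hdiff₁ x ⟨⟨lt_of_le_of_lt ha0 hx.1.1, lt_of_lt_of_le hx.1.2 hb1⟩, hx.2⟩)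
      (hi₁.mono_set (Set.Ioc_subset_Ioc ha0 hb1))
      (hderiv0.mono (fun t ht => ht.1))
  have hconst₂ : g₂ b = g₂ a := by
    refine my_const_of_ae_deriv_zero g₂ S₂ a b hab
      (hg₂c.mono (Set.Icc_subset_Icc ha0 hb1))
      (fun x hx => hdiff₂ x ⟨⟨lt_of_le_of_lt ha0 hx.1.1, lt_of_lt_of_le hx.1.2 hb1⟩, hx.2⟩)
      (hi₂.mono_set (Set.Ioc_subset_Ioc ha0 hb1))
      (hderiv0.mono (fun t ht => ht.2))
  have hc₁ : ∀ t ∈ Set.Icc a b, g₁ t = g₁ a := by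
    intro t ht
    have htI : t ∈ Set.Icc (0:ℝ) 1 := ⟨ha0.trans ht.1, ht.2.trans hb1⟩
    exact le_antisymm (hconst₁ ▸ hm₁ htI hbI ht.2) (hm₁ haI htI ht.1)
  have hc₂ : ∀ t ∈ Set.Icc a b, g₂ t = g₂ a := by
    intro t ht
    have htI : t ∈ Set.Icc (0:ℝ) 1 := ⟨ha0.trans ht.1, ht.2.trans hb1⟩
    exact le_antisymm (hconst₂ ▸ hm₂ htI hbI ht.2) (hm₂ haI htI ht.1)
  -- h a = h t₀ > 0 and h b = h t₀ > 0
  have ht₀ab : t₀ ∈ Set.Icc a b := ⟨hat₀, ht₀b⟩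
  have hha : h a = h t₀ := by
    simp only [hh_def]
    rw [hc₁ t₀ ht₀ab, hc₂ t₀ ht₀ab]
  have hhb : h b = h t₀ := by
    simp only [hh_def]
    rw [hc₁ t₀ ht₀ab, hc₂ t₀ ht₀ab, hc₁ b (Set.right_mem_Icc.2 hab), hc₂ b (Set.right_mem_Icc.2 hab)]
  have ha_eq : a = 0 := by
    rcases haZ with h0 | hmem
    · exact h0
    · exfalso
      have : h a = 0 := hmem.2
      rw [hha] at this
      exact absurd this (ne_of_gt ht₀pos)
  have hb_eq : b = 1 := by
    rcases hbW with h1' | hmem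
    · exact h1'
    · exfalso
      have : h b = 0 := hmem.2
      rw [hhb] at this
      exact absurd this (ne_of_gt ht₀pos)
  -- contradiction: g₁ is constant on [0,1] but g₁ 0 = 0 and g₁ 1 = 1
  have : (1:ℝ) = 0 := by
    rw [← h₁1, ← h₁0, ← ha_eq, ← hb_eq]
    exact hconst₁
  exact one_ne_zero this

/-- `g` is piecewise-C¹ on `[0,1]`: continuous, differentiable except at finitely many
points, with derivative continuous off that finite exceptional set. -/
def PiecewiseC1 (g : ℝ → ℝ) : Prop :=
  ContinuousOn g (Set.Icc 0 1) ∧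
  ∃ S : Finset ℝ,
    (∀ x ∈ Set.Icc (0:ℝ) 1 \ S, DifferentiableAt ℝ g x) ∧
    ContinuousOn (deriv g) (Set.Icc 0 1 \ S)

/-- `g` has finitely many flat regions: the zero set of `g'` in `[0,1]` has finitely many
connected components. -/
def FiniteFlats (g : ℝ → ℝ) : Prop :=
  {C : Set ℝ | ∃ x ∈ {y ∈ Set.Icc (0:ℝ) 1 | deriv g y = 0},
      C = connectedComponentIn {y ∈ Set.Icc (0:ℝ) 1 | deriv g y = 0} x}.Finite

/-- The class C¹_FF([0,1]). -/
def C1FF (g : ℝ → ℝ) : Prop := PiecewiseC1 g ∧ FiniteFlats g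

/-- The set 𝒢 of admissible time warps: C¹_FF, non-decreasing on `[0,1]`,
with `g 0 = 0` and `g 1 = 1`. -/
def InG (g : ℝ → ℝ) : Prop :=
  C1FF g ∧ MonotoneOn g (Set.Icc 0 1) ∧ g 0 = 0 ∧ g 1 = 1

/-- Cost of the continuous warping path `γ(t) = (g₁ t, g₂ t)`. -/
noncomputable def warpCost (s φ g₁ g₂ : ℝ → ℝ) : ℝ :=
  ∫ t in (0:ℝ)..1, |s (g₁ t) - φ (g₂ t)| * (deriv g₁ t + deriv g₂ t)

/-- Continuous dynamic time warping divergence: infimum of warp costs over `𝒢 × 𝒢`. -/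
noncomputable def CDTW (s φ : ℝ → ℝ) : ℝ :=
  sInf {c : ℝ | ∃ g₁ g₂ : ℝ → ℝ, InG g₁ ∧ InG g₂ ∧ warpCost s φ g₁ g₂ = c}

/-- if the warping path `γ* = (g₁, g₂)` has zero cost, i.e.
`∫₀¹ |s(g₁ t) − φ(g₂ t)| (g₁' t + g₂' t) dt = 0`, then `s ∘ g₁ = φ ∘ g₂` on `[0,1]`. -/
theorem warpCost_zero_implies_match (s φ g₁ g₂ : ℝ → ℝ)
    (hs : C1FF s) (hφ : C1FF φ) (hg₁ : InG g₁) (hg₂ : InG g₂)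
    (hzero : warpCost s φ g₁ g₂ = 0) :
    ∀ t ∈ Set.Icc (0:ℝ) 1, s (g₁ t) = φ (g₂ t) := by
  obtain ⟨⟨⟨hg₁c, S₁, hd₁, _⟩, _⟩, hm₁, h₁0, h₁1⟩ := hg₁
  obtain ⟨⟨⟨hg₂c, S₂, hd₂, _⟩, _⟩, hm₂, h₂0, h₂1⟩ := hg₂
  exact my_main s φ g₁ g₂ hs.1.1 hφ.1.1 hg₁c hg₂c hm₁ hm₂ h₁0 h₁1 h₂0 h₂1 S₁ S₂ hd₁ hd₂ hzero
end

section
/- Let s, φ ∈ C¹_FF([0,1]) with bounded derivatives. For every ε > 0 there exists δ > 0 such that for every N ∈ ℕ with step size Δ = 1/N ≤ δ, if s̄, φ̄ ∈ ℝ^{N+1} are the discretizations s̄(j) = s(j/N), φ̄(j) = φ(j/N), then |CDTW(s,φ) − DTW_ω(s̄,φ̄)| < ε, where DTW_ω is the weighted discrete dynamic time warping divergence. -/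
open Set MeasureTheory

/-- An admissible discrete warping path of length `L` for series of length `N+1`. -/
def DTWPath (N L : ℕ) (g1 g2 : ℕ → ℕ) : Prop :=
  g1 0 = 0 ∧ g2 0 = 0 ∧ g1 L = N ∧ g2 L = N ∧ N ≤ L ∧ L ≤ 2 * N ∧
  (∀ j < L, g1 j ≤ g1 (j + 1) ∧ g1 (j + 1) ≤ g1 j + 1) ∧
  (∀ j < L, g2 j ≤ g2 (j + 1) ∧ g2 (j + 1) ≤ g2 j + 1)

/-- The weighted discrete DTW divergence `DTW_ω`, with weights
`ω_i = (|ḡ₁(i) − ḡ₁(i−1)| + |ḡ₂(i) − ḡ₂(i−1)|) / N`. -/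
noncomputable def DTWw (N : ℕ) (sb fb : ℕ → ℝ) : ℝ :=
  sInf {c : ℝ | ∃ (L : ℕ) (g1 g2 : ℕ → ℕ), DTWPath N L g1 g2 ∧
    (∑ i ∈ Finset.range L,
      |sb (g1 (i + 1)) - fb (g2 (i + 1))| *
        ((|(g1 (i + 1) : ℝ) - (g1 i : ℝ)| + |(g2 (i + 1) : ℝ) - (g2 i : ℝ)|) / N)) = c}

/-!
With `K` the sum of the Lipschitz constants of `s` and `φ` (the bounds on their derivatives, through
the fundamental theorem of calculus off finitely many points), both `CDTW ≤ DTW_ω + 2K/N` and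
`DTW_ω ≤ CDTW + 4K/N` come from transporting warps between the two settings.

A discrete path `(p, q)` of length `L` gives the continuous warps interpolating `p / N` and `q / N`
linearly on the grid `k / L`. On each cell both warps stay within `1 / N` of the next node of the
path, so the cost of the cell exceeds the corresponding discrete term by at most `K / N` times its
weight, and the weights add up to `2`.

Conversely, a continuous warp `(g₁, g₂)` is sampled at times `T k` with `g₁ + g₂ = k / N`,
`k ≤ 2N`, and rounded to a lattice path whose `2N` steps all have weight `1 / N`. Each discrete term
is then bounded by the cost of the warp on `[T k, T (k + 1)]`, up to `2K / N²`.
-/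

open scoped NNReal

theorem MonotoneOn.deriv_nonneg_of_mem_Icc {g : ℝ → ℝ} {a b t : ℝ} (hab : a < b)
    (hg : MonotoneOn g (Icc a b)) (ht : t ∈ Icc a b) : 0 ≤ deriv g t := by
  by_cases hd : DifferentiableAt ℝ g t
  · rw [← hd.derivWithin (uniqueDiffOn_Icc hab t ht)]
    exact hg.derivWithin_nonneg
  · rw [deriv_zero_of_not_differentiableAt hd]

theorem finite_connectedComponentIn_of_subset_union {X ι : Type*} [TopologicalSpace X]
    {Z F : Set X} {I : Set ι} {U : ι → Set X} (hF : F.Finite) (hI : I.Finite)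
    (hU : ∀ i ∈ I, IsPreconnected (U i)) (hUZ : ∀ i ∈ I, U i ⊆ Z)
    (hZ : Z ⊆ F ∪ ⋃ i ∈ I, U i) :
    {C : Set X | ∃ x ∈ Z, C = connectedComponentIn Z x}.Finite := by
  have hsub : {C : Set X | ∃ x ∈ Z, C = connectedComponentIn Z x} ⊆
      connectedComponentIn Z '' F ∪ ⋃ i ∈ I, connectedComponentIn Z '' U i := by
    rintro _ ⟨x, hx, rfl⟩
    rcases hZ hx with hxF | hxU
    · exact Or.inl (mem_image_of_mem _ hxF)
    · obtain ⟨i, hi, hxi⟩ := mem_iUnion₂.1 hxU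
      exact Or.inr (mem_iUnion₂.2 ⟨i, hi, mem_image_of_mem _ hxi⟩)
  refine ((hF.image _).union (hI.biUnion fun i hi => Subsingleton.finite ?_)).subset hsub
  rintro _ ⟨x, hx, rfl⟩ _ ⟨y, hy, rfl⟩
  exact connectedComponentIn_eq ((hU i hi).subset_connectedComponentIn hx (hUZ i hi) hy)

theorem monotoneOn_nat_Iic_of_le_succ {α : Type*} [Preorder α] {f : ℕ → α} {n : ℕ}
    (hf : ∀ k < n, f k ≤ f (k + 1)) : MonotoneOn f (Iic n) :=
  monotoneOn_of_le_succ ordConnected_Iic fun k _ _ hk => by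
    rw [Order.succ_eq_add_one] at hk ⊢
    exact hf k hk

theorem natCast_div_mem_Icc {k N : ℕ} (hk : k ≤ N) : (k:ℝ) / N ∈ Icc (0:ℝ) 1 :=
  ⟨by positivity, div_le_one_of_le₀ (by exact_mod_cast hk) N.cast_nonneg⟩

theorem exists_mem_Ioo_of_ne_natCast_div {L : ℕ} (hL : 0 < L) {x : ℝ} (hx : x ∈ Icc (0:ℝ) 1)
    (hxk : ∀ k ≤ L, x ≠ k / L) : ∃ k < L, x ∈ Ioo ((k:ℝ) / L) ((k + 1) / L) := by
  have hLR : (0:ℝ) < L := Nat.cast_pos.2 hL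
  set k := ⌊L * x⌋₊
  have hk : (k:ℝ) ≤ L * x := Nat.floor_le (by nlinarith [hx.1])
  have hk' : L * x < k + 1 := Nat.lt_floor_add_one _
  have hkL : (k:ℝ) ≤ L := hk.trans (by nlinarith [hx.2])
  have hkx : (k:ℝ) < L * x := hk.lt_of_ne fun h =>
    hxk k (by exact_mod_cast hkL) (by rw [h]; field_simp)
  have hkL' : (k:ℝ) < L := hkx.trans_le (by nlinarith [hx.2])
  refine ⟨k, by exact_mod_cast hkL', ?_, ?_⟩
  · rw [div_lt_iff₀ hLR]; linarith
  · rw [lt_div_iff₀ hLR]; linarith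

theorem Ioo_natCast_div_subset_Icc {L k : ℕ} (hk : k < L) :
    Ioo ((k:ℝ) / L) ((k + 1) / L) ⊆ Icc 0 1 := by
  have hLR : (0:ℝ) < L := Nat.cast_pos.2 (k.zero_le.trans_lt hk)
  have hkL : (k:ℝ) + 1 ≤ L := by exact_mod_cast hk
  exact fun t ht => ⟨(div_nonneg k.cast_nonneg hLR.le).trans ht.1.le,
    ht.2.le.trans ((div_le_one hLR).2 hkL)⟩

theorem abs_natFloor_div_sub_le {N : ℕ} (hN : 0 < N) {u : ℝ} (hu : 0 ≤ u) :
    |(⌊N * u⌋₊ : ℝ) / N - u| ≤ 1 / N := by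
  have hNR : (0:ℝ) < N := Nat.cast_pos.2 hN
  have h₀ := Nat.floor_le (mul_nonneg hNR.le hu)
  have h₁ := Nat.lt_floor_add_one ((N:ℝ) * u)
  rw [show (⌊N * u⌋₊ : ℝ) / N - u = (⌊N * u⌋₊ - N * u) / N by field_simp, abs_div,
    abs_of_pos hNR, div_le_div_iff_of_pos_right hNR, abs_le]
  constructor <;> linarith

theorem exists_hittingTimes {h : ℝ → ℝ} (hc : ContinuousOn h (Icc 0 1))
    (hm : MonotoneOn h (Icc 0 1)) {n : ℕ} {y : ℕ → ℝ} (hy : StrictMono y)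
    (hyr : ∀ k ≤ n, y k ∈ Icc (h 0) (h 1)) :
    ∃ T : ℕ → ℝ, (∀ k ≤ n, T k ∈ Icc (0:ℝ) 1 ∧ h (T k) = y k) ∧ ∀ k < n, T k ≤ T (k + 1) := by
  have hex : ∀ k, ∃ t, k ≤ n → t ∈ Icc (0:ℝ) 1 ∧ h t = y k := fun k => by
    by_cases hk : k ≤ n
    · obtain ⟨t, ht, hty⟩ := intermediate_value_Icc zero_le_one hc (hyr k hk)
      exact ⟨t, fun _ => ⟨ht, hty⟩⟩
    · exact ⟨0, fun hk' => absurd hk' hk⟩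
  choose T hT using hex
  refine ⟨T, hT, fun k hk => le_of_not_gt fun hlt => ?_⟩
  have hle := hm (hT (k + 1) hk).1 (hT k hk.le).1 hlt.le
  rw [(hT k hk.le).2, (hT (k + 1) hk).2] at hle
  exact (hy k.lt_succ_self).not_ge hle

namespace PiecewiseC1

variable {g : ℝ → ℝ} {a b : ℝ}

theorem integral_deriv_eq_sub (hg : PiecewiseC1 g) (ha : a ∈ Icc (0:ℝ) 1) (hb : b ∈ Icc (0:ℝ) 1)
    (hi : IntervalIntegrable (deriv g) volume a b) : ∫ t in a..b, deriv g t = g b - g a := by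
  obtain ⟨hc, S, hd, -⟩ := hg
  have hsub : uIcc a b ⊆ Icc 0 1 := uIcc_subset_Icc ha hb
  refine integral_eq_of_hasDerivAt_off_countable g (deriv g) S.countable_toSet (hc.mono hsub)
    (fun x hx => ?_) hi
  exact (hd x ⟨hsub (Ioo_subset_Icc_self hx.1), hx.2⟩).hasDerivAt

theorem lipschitzOnWith (hg : PiecewiseC1 g) {M : ℝ} (hM : ∀ x ∈ Icc (0:ℝ) 1, |deriv g x| ≤ M) :
    LipschitzOnWith M.toNNReal g (Icc 0 1) := by
  refine LipschitzOnWith.of_dist_le' fun x hx y hy => ?_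
  have hsub : uIcc y x ⊆ Icc 0 1 := uIcc_subset_Icc hy hx
  have hi : IntervalIntegrable (deriv g) volume y x :=
    intervalIntegrable_const.mono_fun' (measurable_deriv g).aestronglyMeasurable
      (ae_restrict_of_forall_mem measurableSet_uIoc fun t ht =>
        hM t (hsub (uIoc_subset_uIcc ht)))
  rw [Real.dist_eq, Real.dist_eq, ← hg.integral_deriv_eq_sub hy hx hi, ← Real.norm_eq_abs]
  exact intervalIntegral.norm_integral_le_of_norm_le_const fun t ht =>
    hM t (hsub (uIoc_subset_uIcc ht))

end PiecewiseC1

namespace InG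

variable {g : ℝ → ℝ} {a b t : ℝ}

theorem mapsTo (hg : InG g) : MapsTo g (Icc 0 1) (Icc 0 1) := fun _ ht =>
  ⟨hg.2.2.1 ▸ hg.2.1 (left_mem_Icc.2 zero_le_one) ht ht.1,
    hg.2.2.2 ▸ hg.2.1 ht (right_mem_Icc.2 zero_le_one) ht.2⟩

theorem deriv_nonneg (hg : InG g) (ht : t ∈ Icc (0:ℝ) 1) : 0 ≤ deriv g t :=
  hg.2.1.deriv_nonneg_of_mem_Icc zero_lt_one ht

theorem intervalIntegrable_deriv (hg : InG g) (ha : a ∈ Icc (0:ℝ) 1) (hb : b ∈ Icc (0:ℝ) 1) :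
    IntervalIntegrable (deriv g) volume a b :=
  (hg.2.1.mono (uIcc_subset_Icc ha hb)).intervalIntegrable_deriv

theorem integral_deriv (hg : InG g) (ha : a ∈ Icc (0:ℝ) 1) (hb : b ∈ Icc (0:ℝ) 1) :
    ∫ t in a..b, deriv g t = g b - g a :=
  hg.1.1.integral_deriv_eq_sub ha hb (hg.intervalIntegrable_deriv ha hb)

theorem id : InG fun x => x := by
  have hderiv : deriv (fun x : ℝ => x) = fun _ => 1 := funext fun _ => deriv_id _
  refine ⟨⟨⟨continuousOn_id, ∅, fun x _ => differentiableAt_id, ?_⟩, ?_⟩,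
    fun _ _ _ _ h => h, rfl, rfl⟩
  · rw [hderiv]
    exact continuousOn_const
  · simp [FiniteFlats, hderiv]

end InG

theorem C1FF_of_hasDerivAt_Ioo {G : ℝ → ℝ} {L : ℕ} (hL : 0 < L)
    (hc : ContinuousOn G (Icc 0 1)) {m : ℕ → ℝ}
    (hG : ∀ k < L, ∀ t ∈ Ioo ((k:ℝ) / L) ((k + 1) / L), HasDerivAt G (m k) t) : C1FF G := by
  classical
  set S : Finset ℝ := (Finset.range (L + 1)).image fun k : ℕ => (k:ℝ) / L
  have hcell : ∀ x ∈ Icc (0:ℝ) 1 \ S, ∃ k < L, x ∈ Ioo ((k:ℝ) / L) ((k + 1) / L) :=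
    fun x hx => exists_mem_Ioo_of_ne_natCast_div hL hx.1 fun k hk h =>
      hx.2 (Finset.mem_coe.2 (Finset.mem_image.2 ⟨k, Finset.mem_range.2 (by omega), h.symm⟩))
  have hderiv : ∀ k < L, ∀ t ∈ Ioo ((k:ℝ) / L) ((k + 1) / L), deriv G t = m k :=
    fun k hk t ht => (hG k hk t ht).deriv
  refine ⟨⟨hc, S, fun x hx => ?_, fun x hx => ?_⟩, ?_⟩
  · obtain ⟨k, hk, hxk⟩ := hcell x hx
    exact (hG k hk x hxk).differentiableAt
  · obtain ⟨k, hk, hxk⟩ := hcell x hx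
    refine ((continuousAt_const (y := m k)).congr ?_).continuousWithinAt
    filter_upwards [Ioo_mem_nhds hxk.1 hxk.2] with t ht
    exact (hderiv k hk t ht).symm
  · refine finite_connectedComponentIn_of_subset_union
      (U := fun k : ℕ => Ioo ((k:ℝ) / L) ((k + 1) / L)) S.finite_toSet
      ((Finset.range L).filter fun k => m k = 0).finite_toSet
      (fun _ _ => isPreconnected_Ioo) (fun k hk t ht => ?_) fun x hx => ?_
    · obtain ⟨hkL, hmk⟩ := Finset.mem_filter.1 hk
      exact ⟨Ioo_natCast_div_subset_Icc (Finset.mem_range.1 hkL) ht,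
        (hderiv k (Finset.mem_range.1 hkL) t ht).trans hmk⟩
    · by_cases hxS : x ∈ (S : Set ℝ)
      · exact Or.inl hxS
      · obtain ⟨k, hk, hxk⟩ := hcell x ⟨hx.1, hxS⟩
        refine Or.inr (mem_iUnion₂.2 ⟨k, ?_, hxk⟩)
        exact Finset.mem_filter.2 ⟨Finset.mem_range.2 hk, (hderiv k hk x hxk).symm.trans hx.2⟩

/-- The piecewise linear interpolant of `v` at the nodes `k / L`: the `i`-th summand ramps from `0`
to `v (i + 1) - v i` across the cell `[i / L, (i + 1) / L]`. -/
noncomputable def linInterp (L : ℕ) (v : ℕ → ℝ) (t : ℝ) : ℝ :=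
  v 0 + ∑ i ∈ Finset.range L, (v (i + 1) - v i) * max 0 (min 1 (L * t - i))

namespace linInterp

variable {L k : ℕ} {v : ℕ → ℝ} {t : ℝ}

theorem continuous : Continuous (linInterp L v) := by
  unfold linInterp
  fun_prop

theorem monotone (hv : ∀ k < L, v k ≤ v (k + 1)) : Monotone (linInterp L v) := by
  intro a b hab
  refine add_le_add_right (Finset.sum_le_sum fun i hi => ?_) _
  refine mul_le_mul_of_nonneg_left ?_ (sub_nonneg.2 (hv i (Finset.mem_range.1 hi)))
  gcongr

theorem eq_of_mem (hk : k < L) (ht : (k:ℝ) ≤ L * t) (ht' : L * t ≤ k + 1) :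
    linInterp L v t = v k + (v (k + 1) - v k) * (L * t - k) := by
  have hzero : ∀ i ∈ Finset.range L, i ∉ Finset.range (k + 1) →
      (v (i + 1) - v i) * max 0 (min 1 (L * t - i)) = 0 := by
    intro i _ hi
    have hki : (k:ℝ) + 1 ≤ i := by exact_mod_cast not_lt.1 (Finset.mem_range.not.1 hi)
    rw [max_eq_left (by linarith [min_le_right 1 (L * t - i)]), mul_zero]
  have hone : ∀ i ∈ Finset.range k,
      (v (i + 1) - v i) * max 0 (min 1 (L * t - i)) = v (i + 1) - v i := by
    intro i hi
    have hik : (i:ℝ) + 1 ≤ k := by exact_mod_cast Finset.mem_range.1 hi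
    rw [min_eq_left (by linarith), max_eq_right zero_le_one, mul_one]
  rw [linInterp, ← Finset.sum_subset (Finset.range_subset_range.2 hk) hzero,
    Finset.sum_range_succ, Finset.sum_congr rfl hone, Finset.sum_range_sub,
    min_eq_right (by linarith), max_eq_right (by linarith)]
  ring

theorem apply_natCast_div (hL : 0 < L) (hk : k ≤ L) : linInterp L v (k / L) = v k := by
  have hLR : (L:ℝ) ≠ 0 := Nat.cast_ne_zero.2 hL.ne'
  have hmul : (L:ℝ) * (k / L) = k := mul_div_cancel₀ _ hLR
  rcases hk.lt_or_eq with hk | hk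
  · rw [eq_of_mem hk hmul.ge (by linarith), hmul, sub_self, mul_zero, add_zero]
  · obtain ⟨j, rfl⟩ : ∃ j, L = j + 1 := ⟨L - 1, by omega⟩
    subst hk
    rw [eq_of_mem (k := j) (by omega) (by push_cast at hmul ⊢; linarith)
      (by push_cast at hmul ⊢; linarith), hmul]
    push_cast
    ring

theorem hasDerivAt (hk : k < L) (ht : t ∈ Ioo ((k:ℝ) / L) ((k + 1) / L)) :
    HasDerivAt (linInterp L v) (L * (v (k + 1) - v k)) t := by
  have hLR : (0:ℝ) < L := Nat.cast_pos.2 (k.zero_le.trans_lt hk)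
  have hlin : HasDerivAt (fun u => v k + (v (k + 1) - v k) * (L * u - k))
      (L * (v (k + 1) - v k)) t := by
    simpa [mul_comm] using (((hasDerivAt_id t).const_mul (L:ℝ)).sub_const (k:ℝ)).const_mul
      (v (k + 1) - v k) |>.const_add (v k)
  refine hlin.congr_of_eventuallyEq ?_
  filter_upwards [Ioo_mem_nhds ht.1 ht.2] with u hu
  have h1 := (div_lt_iff₀ hLR).1 hu.1
  have h2 := (lt_div_iff₀ hLR).1 hu.2
  exact eq_of_mem hk (by linarith) (by linarith)

theorem inG (hL : 0 < L) (hv0 : v 0 = 0) (hvL : v L = 1) (hv : ∀ k < L, v k ≤ v (k + 1)) :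
    InG (linInterp L v) := by
  refine ⟨C1FF_of_hasDerivAt_Ioo hL continuous.continuousOn fun k hk t ht => hasDerivAt hk ht,
    (monotone hv).monotoneOn _, ?_, ?_⟩
  · simpa [hv0] using apply_natCast_div (v := v) hL (Nat.zero_le L)
  · simpa [hvL, Nat.cast_ne_zero.2 hL.ne'] using apply_natCast_div (v := v) hL le_rfl

theorem abs_sub_le (hL : 0 < L)
    (hv : ∀ k < L, v k ≤ v (k + 1)) (hk : k < L) (ht : t ∈ Icc ((k:ℝ) / L) ((k + 1 : ℕ) / L)) :
    |linInterp L v t - v (k + 1)| ≤ v (k + 1) - v k := by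
  have h₀ := monotone hv ht.1
  have h₁ := monotone hv ht.2
  rw [apply_natCast_div hL hk.le] at h₀
  rw [apply_natCast_div hL hk] at h₁
  rw [abs_le]
  constructor <;> linarith

end linInterp

theorem abs_sub_le_of_lipschitzOnWith {s φ : ℝ → ℝ} {Ks Kφ : ℝ≥0}
    (hs : LipschitzOnWith Ks s (Icc 0 1)) (hφ : LipschitzOnWith Kφ φ (Icc 0 1))
    {x x' y y' δ : ℝ} (hx : x ∈ Icc (0:ℝ) 1) (hx' : x' ∈ Icc (0:ℝ) 1) (hy : y ∈ Icc (0:ℝ) 1)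
    (hy' : y' ∈ Icc (0:ℝ) 1) (hxx : |x - x'| ≤ δ) (hyy : |y - y'| ≤ δ) :
    |s x - φ y| ≤ |s x' - φ y'| + (Ks + Kφ) * δ := by
  have es : |s x - s x'| ≤ Ks * δ := by
    simpa only [Real.dist_eq] using (hs.dist_le_mul x hx x' hx').trans (by gcongr; exact hxx)
  have eφ : |φ y - φ y'| ≤ Kφ * δ := by
    simpa only [Real.dist_eq] using (hφ.dist_le_mul y hy y' hy').trans (by gcongr; exact hyy)
  calc |s x - φ y| = |(s x - s x') + (s x' - φ y') - (φ y - φ y')| := by ring_nf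
    _ ≤ |s x - s x'| + |s x' - φ y'| + |φ y - φ y'| :=
      (abs_sub _ _).trans (add_le_add (abs_add_le _ _) le_rfl)
    _ ≤ _ := by linarith

noncomputable def warpDensity (s φ g₁ g₂ : ℝ → ℝ) (t : ℝ) : ℝ :=
  |s (g₁ t) - φ (g₂ t)| * (deriv g₁ t + deriv g₂ t)

theorem warpCost_eq_integral (s φ g₁ g₂ : ℝ → ℝ) :
    warpCost s φ g₁ g₂ = ∫ t in (0:ℝ)..1, warpDensity s φ g₁ g₂ t := rfl

section WarpDensity

variable {s φ g₁ g₂ : ℝ → ℝ} {a b c t : ℝ}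

theorem warpDensity_nonneg (h₁ : InG g₁) (h₂ : InG g₂) (ht : t ∈ Icc (0:ℝ) 1) :
    0 ≤ warpDensity s φ g₁ g₂ t :=
  mul_nonneg (abs_nonneg _) (add_nonneg (h₁.deriv_nonneg ht) (h₂.deriv_nonneg ht))

theorem intervalIntegrable_warpDensity (hs : ContinuousOn s (Icc 0 1))
    (hφ : ContinuousOn φ (Icc 0 1)) (h₁ : InG g₁) (h₂ : InG g₂) (ha : a ∈ Icc (0:ℝ) 1)
    (hb : b ∈ Icc (0:ℝ) 1) : IntervalIntegrable (warpDensity s φ g₁ g₂) volume a b :=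
  ((h₁.intervalIntegrable_deriv ha hb).add (h₂.intervalIntegrable_deriv ha hb)).continuousOn_mul
    (((hs.comp h₁.1.1.1 h₁.mapsTo).sub (hφ.comp h₂.1.1.1 h₂.mapsTo)).abs.mono
      (uIcc_subset_Icc ha hb))

theorem integral_deriv_add_deriv (h₁ : InG g₁) (h₂ : InG g₂) (ha : a ∈ Icc (0:ℝ) 1)
    (hb : b ∈ Icc (0:ℝ) 1) :
    ∫ t in a..b, (deriv g₁ t + deriv g₂ t) = g₁ b - g₁ a + (g₂ b - g₂ a) := by
  rw [intervalIntegral.integral_add (h₁.intervalIntegrable_deriv ha hb)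
    (h₂.intervalIntegrable_deriv ha hb), h₁.integral_deriv ha hb, h₂.integral_deriv ha hb]

theorem integral_warpDensity_le (hs : ContinuousOn s (Icc 0 1)) (hφ : ContinuousOn φ (Icc 0 1))
    (h₁ : InG g₁) (h₂ : InG g₂) (ha : a ∈ Icc (0:ℝ) 1) (hb : b ∈ Icc (0:ℝ) 1) (hab : a ≤ b)
    (hc : ∀ t ∈ Icc a b, |s (g₁ t) - φ (g₂ t)| ≤ c) :
    ∫ t in a..b, warpDensity s φ g₁ g₂ t ≤ c * (g₁ b - g₁ a + (g₂ b - g₂ a)) := by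
  rw [← integral_deriv_add_deriv h₁ h₂ ha hb, ← intervalIntegral.integral_const_mul]
  refine intervalIntegral.integral_mono_on hab (intervalIntegrable_warpDensity hs hφ h₁ h₂ ha hb)
    (((h₁.intervalIntegrable_deriv ha hb).add (h₂.intervalIntegrable_deriv ha hb)).const_mul c)
    fun t ht => mul_le_mul_of_nonneg_right (hc t ht) ?_
  have ht' := Icc_subset_Icc ha.1 hb.2 ht
  exact add_nonneg (h₁.deriv_nonneg ht') (h₂.deriv_nonneg ht')

theorem le_integral_warpDensity (hs : ContinuousOn s (Icc 0 1)) (hφ : ContinuousOn φ (Icc 0 1))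
    (h₁ : InG g₁) (h₂ : InG g₂) (ha : a ∈ Icc (0:ℝ) 1) (hb : b ∈ Icc (0:ℝ) 1) (hab : a ≤ b)
    (hc : ∀ t ∈ Icc a b, c ≤ |s (g₁ t) - φ (g₂ t)|) :
    c * (g₁ b - g₁ a + (g₂ b - g₂ a)) ≤ ∫ t in a..b, warpDensity s φ g₁ g₂ t := by
  rw [← integral_deriv_add_deriv h₁ h₂ ha hb, ← intervalIntegral.integral_const_mul]
  refine intervalIntegral.integral_mono_on hab
    (((h₁.intervalIntegrable_deriv ha hb).add (h₂.intervalIntegrable_deriv ha hb)).const_mul c)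
    (intervalIntegrable_warpDensity hs hφ h₁ h₂ ha hb)
    fun t ht => mul_le_mul_of_nonneg_right (hc t ht) ?_
  have ht' := Icc_subset_Icc ha.1 hb.2 ht
  exact add_nonneg (h₁.deriv_nonneg ht') (h₂.deriv_nonneg ht')

theorem integral_warpDensity_le_warpCost (hs : ContinuousOn s (Icc 0 1))
    (hφ : ContinuousOn φ (Icc 0 1)) (h₁ : InG g₁) (h₂ : InG g₂) (ha : a ∈ Icc (0:ℝ) 1)
    (hb : b ∈ Icc (0:ℝ) 1) (hab : a ≤ b) :
    ∫ t in a..b, warpDensity s φ g₁ g₂ t ≤ warpCost s φ g₁ g₂ :=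
  intervalIntegral.integral_mono_interval ha.1 hab hb.2
    (ae_restrict_of_forall_mem measurableSet_Ioc fun _ ht =>
      warpDensity_nonneg h₁ h₂ (Ioc_subset_Icc_self ht))
    (intervalIntegrable_warpDensity hs hφ h₁ h₂ (left_mem_Icc.2 zero_le_one)
      (right_mem_Icc.2 zero_le_one))

end WarpDensity

/-- The paper's weight `ω_{i+1}`. -/
noncomputable def dtwWeight (N : ℕ) (p q : ℕ → ℕ) (i : ℕ) : ℝ :=
  (|(p (i + 1) : ℝ) - p i| + |(q (i + 1) : ℝ) - q i|) / N

noncomputable def dtwCost (N : ℕ) (sb fb : ℕ → ℝ) (L : ℕ) (p q : ℕ → ℕ) : ℝ :=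
  ∑ i ∈ Finset.range L, |sb (p (i + 1)) - fb (q (i + 1))| * dtwWeight N p q i

namespace DTWPath

variable {N L k : ℕ} {p q : ℕ → ℕ}

theorem le (h : DTWPath N L p q) (hk : k ≤ L) : p k ≤ N ∧ q k ≤ N := by
  obtain ⟨-, -, hpL, hqL, -, -, hp, hq⟩ := h
  exact ⟨hpL ▸ monotoneOn_nat_Iic_of_le_succ (fun j hj => (hp j hj).1) hk self_mem_Iic hk,
    hqL ▸ monotoneOn_nat_Iic_of_le_succ (fun j hj => (hq j hj).1) hk self_mem_Iic hk⟩

theorem dtwWeight_eq (h : DTWPath N L p q) (hk : k < L) :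
    dtwWeight N p q k = ((p (k + 1) : ℝ) + q (k + 1) - (p k + q k)) / N := by
  obtain ⟨-, -, -, -, -, -, hp, hq⟩ := h
  rw [dtwWeight, abs_of_nonneg (sub_nonneg.2 (Nat.cast_le.2 (hp k hk).1)),
    abs_of_nonneg (sub_nonneg.2 (Nat.cast_le.2 (hq k hk).1))]
  ring

theorem sum_dtwWeight (h : DTWPath N L p q) (hN : 0 < N) :
    ∑ i ∈ Finset.range L, dtwWeight N p q i = 2 := by
  rw [Finset.sum_congr rfl fun i hi => h.dtwWeight_eq (Finset.mem_range.1 hi), ← Finset.sum_div,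
    Finset.sum_range_sub (fun i => (p i : ℝ) + q i), h.1, h.2.1, h.2.2.1, h.2.2.2.1]
  field_simp
  ring

end DTWPath

theorem dtwPath_natFloor {N : ℕ} {x : ℕ → ℝ} (hx0 : x 0 = 0) (hxN : x (2 * N) = N)
    (hstep : ∀ k < 2 * N, x k ≤ x (k + 1) ∧ x (k + 1) ≤ x k + 1)
    (hx : ∀ k ≤ 2 * N, 0 ≤ x k ∧ x k ≤ k) :
    DTWPath N (2 * N) (fun k => ⌊x k⌋₊) (fun k => k - ⌊x k⌋₊) := by
  have hle : ∀ k ≤ 2 * N, ⌊x k⌋₊ ≤ k := fun k hk => Nat.floor_le_of_le (hx k hk).2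
  have hA : ∀ k < 2 * N, ⌊x k⌋₊ ≤ ⌊x (k + 1)⌋₊ ∧ ⌊x (k + 1)⌋₊ ≤ ⌊x k⌋₊ + 1 := fun k hk =>
    ⟨Nat.floor_mono (hstep k hk).1,
      Nat.floor_add_one (hx k hk.le).1 ▸ Nat.floor_mono (hstep k hk).2⟩
  refine ⟨by simp [hx0], by simp [hx0], by simp [hxN], by simp [hxN]; omega, by omega, le_rfl,
    hA, fun k hk => ?_⟩
  have := hA k hk
  have := hle (k + 1) hk
  dsimp only
  omega

/-- Round `N x` down and let the second coordinate take up the rest, so that every step moves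
exactly one coordinate by one. -/
theorem exists_dtwPath_near {N : ℕ} (hN : 0 < N) {x y : ℕ → ℝ}
    (hxy : ∀ k ≤ 2 * N, x k + y k = k / N) (hx : ∀ k ≤ 2 * N, x k ∈ Icc (0:ℝ) 1)
    (hy : ∀ k ≤ 2 * N, y k ∈ Icc (0:ℝ) 1) (hxm : ∀ k < 2 * N, x k ≤ x (k + 1))
    (hym : ∀ k < 2 * N, y k ≤ y (k + 1)) :
    ∃ p q, DTWPath N (2 * N) p q ∧ ∀ k ≤ 2 * N,
      p k + q k = k ∧ |(p k : ℝ) / N - x k| ≤ 1 / N ∧ |(q k : ℝ) / N - y k| ≤ 1 / N := by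
  have hNR : (0:ℝ) < N := Nat.cast_pos.2 hN
  have hsum : ∀ k ≤ 2 * N, N * x k + N * y k = k := fun k hk => by
    rw [← mul_add, hxy k hk, mul_div_cancel₀ _ hNR.ne']
  have hNx : ∀ k ≤ 2 * N, 0 ≤ N * x k ∧ N * x k ≤ N := fun k hk =>
    ⟨mul_nonneg hNR.le (hx k hk).1, mul_le_of_le_one_right hNR.le (hx k hk).2⟩
  have hNy : ∀ k ≤ 2 * N, 0 ≤ N * y k ∧ N * y k ≤ N := fun k hk =>
    ⟨mul_nonneg hNR.le (hy k hk).1, mul_le_of_le_one_right hNR.le (hy k hk).2⟩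
  have hle : ∀ k ≤ 2 * N, ⌊N * x k⌋₊ ≤ k := fun k hk =>
    Nat.floor_le_of_le (by linarith [hsum k hk, hNy k hk])
  refine ⟨_, _, dtwPath_natFloor (x := fun k => N * x k) ?_ ?_ (fun k hk => ⟨?_, ?_⟩)
    fun k hk => ⟨(hNx k hk).1, ?_⟩, fun k hk => ⟨Nat.add_sub_cancel' (hle k hk), ?_, ?_⟩⟩
  · linarith [hsum 0 (Nat.zero_le _), hNx 0 (Nat.zero_le _), hNy 0 (Nat.zero_le _),
      Nat.cast_zero (R := ℝ)]
  · linarith [hsum (2 * N) le_rfl, hNx (2 * N) le_rfl, hNy (2 * N) le_rfl,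
      show ((2 * N : ℕ) : ℝ) = 2 * N by push_cast; ring]
  · exact mul_le_mul_of_nonneg_left (hxm k hk) hNR.le
  · linarith [hsum k hk.le, hsum (k + 1) hk, mul_le_mul_of_nonneg_left (hym k hk) hNR.le,
      show ((k + 1 : ℕ) : ℝ) = k + 1 by push_cast; ring]
  · linarith [hsum k hk, hNy k hk]
  · exact abs_natFloor_div_sub_le hN (hx k hk).1
  · have hq : ((k - ⌊N * x k⌋₊ : ℕ) : ℝ) / N - y k = -((⌊N * x k⌋₊ : ℝ) / N - x k) := by
      rw [Nat.cast_sub (hle k hk)]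
      field_simp
      linarith [hsum k hk]
    rw [hq, abs_neg]
    exact abs_natFloor_div_sub_le hN (hx k hk).1

theorem inG_linInterp_div {N L : ℕ} {f : ℕ → ℕ} (hN : 0 < N) (hL : 0 < L) (hf0 : f 0 = 0)
    (hfL : f L = N) (hf : ∀ k < L, f k ≤ f (k + 1)) :
    InG (linInterp L fun j => (f j : ℝ) / N) :=
  linInterp.inG hL (by simp [hf0]) (by simp [hfL, hN.ne']) fun k hk => by gcongr; exact hf k hk

theorem abs_linInterp_div_sub_le {N L k : ℕ} {f : ℕ → ℕ} {t : ℝ} (hL : 0 < L)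
    (hf : ∀ k < L, f k ≤ f (k + 1) ∧ f (k + 1) ≤ f k + 1) (hk : k < L)
    (ht : t ∈ Icc ((k:ℝ) / L) ((k + 1 : ℕ) / L)) :
    |linInterp L (fun j => (f j : ℝ) / N) t - f (k + 1) / N| ≤ 1 / N := by
  refine (linInterp.abs_sub_le hL (fun j hj => by gcongr; exact (hf j hj).1) hk ht).trans ?_
  rw [div_sub_div_same]
  gcongr
  have := (hf k hk).2
  rw [sub_le_iff_le_add']
  exact_mod_cast this

theorem exists_warpCost_le_dtwCost {s φ : ℝ → ℝ} {Ks Kφ : ℝ≥0}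
    (hs : LipschitzOnWith Ks s (Icc 0 1)) (hφ : LipschitzOnWith Kφ φ (Icc 0 1))
    {N L : ℕ} {p q : ℕ → ℕ} (hN : 0 < N) (hpath : DTWPath N L p q) :
    ∃ g₁ g₂, InG g₁ ∧ InG g₂ ∧ warpCost s φ g₁ g₂ ≤
      dtwCost N (fun j => s (j / N)) (fun j => φ (j / N)) L p q + 2 * (Ks + Kφ) / N := by
  have ⟨hp0, hq0, hpL, hqL, hNL, _, hp, hq⟩ := hpath
  have hL : 0 < L := hN.trans_le hNL
  set G₁ := linInterp L fun j => (p j : ℝ) / N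
  set G₂ := linInterp L fun j => (q j : ℝ) / N
  have hG₁ : InG G₁ := inG_linInterp_div hN hL hp0 hpL fun k hk => (hp k hk).1
  have hG₂ : InG G₂ := inG_linInterp_div hN hL hq0 hqL fun k hk => (hq k hk).1
  have hcell : ∀ k < L, ∫ t in (k:ℝ) / L..((k + 1 : ℕ) : ℝ) / L, warpDensity s φ G₁ G₂ t ≤
      |s (p (k + 1) / N) - φ (q (k + 1) / N)| * dtwWeight N p q k +
        (Ks + Kφ) / N * dtwWeight N p q k := by
    intro k hk
    have hkI : (k:ℝ) / L ∈ Icc (0:ℝ) 1 := natCast_div_mem_Icc hk.le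
    have hk1I : ((k + 1 : ℕ) : ℝ) / L ∈ Icc (0:ℝ) 1 := natCast_div_mem_Icc hk
    have hsub : Icc ((k:ℝ) / L) ((k + 1 : ℕ) / L) ⊆ Icc 0 1 := Icc_subset_Icc hkI.1 hk1I.2
    refine (integral_warpDensity_le hs.continuousOn hφ.continuousOn hG₁ hG₂ hkI hk1I
      (by gcongr; omega) fun t ht => abs_sub_le_of_lipschitzOnWith hs hφ
        (hG₁.mapsTo (hsub ht)) (natCast_div_mem_Icc (hpath.le hk).1)
        (hG₂.mapsTo (hsub ht)) (natCast_div_mem_Icc (hpath.le hk).2)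
        (abs_linInterp_div_sub_le hL hp hk ht) (abs_linInterp_div_sub_le hL hq hk ht)).trans_eq ?_
    simp only [G₁, G₂]
    rw [linInterp.apply_natCast_div (k := k + 1) hL hk, linInterp.apply_natCast_div hL hk.le,
      linInterp.apply_natCast_div (k := k + 1) hL hk, linInterp.apply_natCast_div hL hk.le,
      hpath.dtwWeight_eq hk]
    ring
  refine ⟨G₁, G₂, hG₁, hG₂, ?_⟩
  calc warpCost s φ G₁ G₂
      = ∑ k ∈ Finset.range L, ∫ t in (k:ℝ) / L..((k + 1 : ℕ) : ℝ) / L,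
          warpDensity s φ G₁ G₂ t := by
        rw [intervalIntegral.sum_integral_adjacent_intervals fun k hk =>
          intervalIntegrable_warpDensity hs.continuousOn hφ.continuousOn hG₁ hG₂
            (natCast_div_mem_Icc hk.le) (natCast_div_mem_Icc hk)]
        simp [warpCost_eq_integral, hL.ne']
    _ ≤ ∑ k ∈ Finset.range L, (|s (p (k + 1) / N) - φ (q (k + 1) / N)| * dtwWeight N p q k +
          (Ks + Kφ) / N * dtwWeight N p q k) :=
        Finset.sum_le_sum fun k hk => hcell k (Finset.mem_range.1 hk)
    _ = _ := by
        rw [Finset.sum_add_distrib, ← Finset.mul_sum, hpath.sum_dtwWeight hN, dtwCost]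
        ring

/-- On `[a, b]` both warps move by at most `δ`, so `|s ∘ g₁ - φ ∘ g₂|` stays within `(Ks + Kφ) δ`
of its value at `b`. -/
theorem abs_sub_mul_le_integral_warpDensity {s φ g₁ g₂ : ℝ → ℝ} {Ks Kφ : ℝ≥0}
    (hs : LipschitzOnWith Ks s (Icc 0 1)) (hφ : LipschitzOnWith Kφ φ (Icc 0 1))
    (h₁ : InG g₁) (h₂ : InG g₂) {a b δ x y : ℝ} (ha : a ∈ Icc (0:ℝ) 1) (hb : b ∈ Icc (0:ℝ) 1)
    (hab : a ≤ b) (hδ : g₁ b - g₁ a + (g₂ b - g₂ a) = δ) (hx : x ∈ Icc (0:ℝ) 1)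
    (hy : y ∈ Icc (0:ℝ) 1) (hxb : |x - g₁ b| ≤ δ) (hyb : |y - g₂ b| ≤ δ) :
    |s x - φ y| * δ ≤ (∫ t in a..b, warpDensity s φ g₁ g₂ t) + 2 * (Ks + Kφ) * δ * δ := by
  have hδ0 : 0 ≤ δ := hδ ▸ add_nonneg (sub_nonneg.2 (h₁.2.1 ha hb hab))
    (sub_nonneg.2 (h₂.2.1 ha hb hab))
  have hmid : ∀ t ∈ Icc a b,
      |s (g₁ b) - φ (g₂ b)| - (Ks + Kφ) * δ ≤ |s (g₁ t) - φ (g₂ t)| := by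
    intro t ht
    have ht' := Icc_subset_Icc ha.1 hb.2 ht
    have m₁ := h₁.2.1 ha ht' ht.1
    have m₁' := h₁.2.1 ht' hb ht.2
    have m₂ := h₂.2.1 ha ht' ht.1
    have m₂' := h₂.2.1 ht' hb ht.2
    have := abs_sub_le_of_lipschitzOnWith (δ := δ) hs hφ (h₁.mapsTo hb) (h₁.mapsTo ht')
      (h₂.mapsTo hb) (h₂.mapsTo ht') (abs_le.2 ⟨by linarith, by linarith⟩)
      (abs_le.2 ⟨by linarith, by linarith⟩)
    linarith
  have hint := le_integral_warpDensity hs.continuousOn hφ.continuousOn h₁ h₂ ha hb hab hmid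
  have hend := abs_sub_le_of_lipschitzOnWith hs hφ hx (h₁.mapsTo hb) hy (h₂.mapsTo hb) hxb hyb
  rw [hδ] at hint
  nlinarith [mul_le_mul_of_nonneg_right hend hδ0]

theorem dtwCost_le_warpCost_add {s φ g₁ g₂ : ℝ → ℝ} {Ks Kφ : ℝ≥0}
    (hs : LipschitzOnWith Ks s (Icc 0 1)) (hφ : LipschitzOnWith Kφ φ (Icc 0 1))
    (h₁ : InG g₁) (h₂ : InG g₂) {N : ℕ} (hN : 0 < N) {T : ℕ → ℝ} {p q : ℕ → ℕ}
    (hT : ∀ k ≤ 2 * N, T k ∈ Icc (0:ℝ) 1 ∧ g₁ (T k) + g₂ (T k) = k / N)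
    (hTmono : ∀ k < 2 * N, T k ≤ T (k + 1)) (hpath : DTWPath N (2 * N) p q)
    (hpq : ∀ k ≤ 2 * N,
      p k + q k = k ∧ |(p k : ℝ) / N - g₁ (T k)| ≤ 1 / N ∧ |(q k : ℝ) / N - g₂ (T k)| ≤ 1 / N) :
    dtwCost N (fun j => s (j / N)) (fun j => φ (j / N)) (2 * N) p q ≤
      warpCost s φ g₁ g₂ + 4 * (Ks + Kφ) / N := by
  have hpq' : ∀ k ≤ 2 * N, (p k : ℝ) + q k = k := fun k hk => by exact_mod_cast (hpq k hk).1
  have hstep : ∀ k < 2 * N, |s (p (k + 1) / N) - φ (q (k + 1) / N)| * dtwWeight N p q k ≤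
      (∫ t in T k..T (k + 1), warpDensity s φ g₁ g₂ t) + 2 * (Ks + Kφ) * (1 / N) * (1 / N) := by
    intro k hk
    rw [hpath.dtwWeight_eq hk, hpq' k hk.le, hpq' (k + 1) hk, Nat.cast_succ, add_sub_cancel_left]
    refine abs_sub_mul_le_integral_warpDensity hs hφ h₁ h₂ (hT k hk.le).1 (hT (k + 1) hk).1
      (hTmono k hk) ?_ (natCast_div_mem_Icc (hpath.le hk).1) (natCast_div_mem_Icc (hpath.le hk).2)
      (hpq (k + 1) hk).2.1 (hpq (k + 1) hk).2.2
    have e₁ := (hT (k + 1) hk).2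
    have e₀ := (hT k hk.le).2
    push_cast at e₁
    rw [add_div] at e₁
    linarith
  calc dtwCost N (fun j => s (j / N)) (fun j => φ (j / N)) (2 * N) p q
      ≤ ∑ k ∈ Finset.range (2 * N), ((∫ t in T k..T (k + 1), warpDensity s φ g₁ g₂ t) +
          2 * (Ks + Kφ) * (1 / N) * (1 / N)) :=
        Finset.sum_le_sum fun k hk => hstep k (Finset.mem_range.1 hk)
    _ = (∫ t in T 0..T (2 * N), warpDensity s φ g₁ g₂ t) + 4 * (Ks + Kφ) / N := by
        rw [Finset.sum_add_distrib, intervalIntegral.sum_integral_adjacent_intervals fun k hk =>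
          intervalIntegrable_warpDensity hs.continuousOn hφ.continuousOn h₁ h₂ (hT k hk.le).1
            (hT (k + 1) hk).1, Finset.sum_const, Finset.card_range, nsmul_eq_mul]
        push_cast
        field_simp
        ring
    _ ≤ warpCost s φ g₁ g₂ + 4 * (Ks + Kφ) / N := by
        gcongr
        exact integral_warpDensity_le_warpCost hs.continuousOn hφ.continuousOn h₁ h₂
          (hT 0 (Nat.zero_le _)).1 (hT (2 * N) le_rfl).1
          (monotoneOn_nat_Iic_of_le_succ hTmono (Nat.zero_le _) self_mem_Iic (Nat.zero_le _))

theorem exists_dtwCost_le_warpCost {s φ g₁ g₂ : ℝ → ℝ} {Ks Kφ : ℝ≥0}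
    (hs : LipschitzOnWith Ks s (Icc 0 1)) (hφ : LipschitzOnWith Kφ φ (Icc 0 1))
    (h₁ : InG g₁) (h₂ : InG g₂) {N : ℕ} (hN : 0 < N) :
    ∃ L p q, DTWPath N L p q ∧ dtwCost N (fun j => s (j / N)) (fun j => φ (j / N)) L p q ≤
      warpCost s φ g₁ g₂ + 4 * (Ks + Kφ) / N := by
  have hNR : (0:ℝ) < N := Nat.cast_pos.2 hN
  obtain ⟨T, hT, hTmono⟩ := exists_hittingTimes (h := fun t => g₁ t + g₂ t)
    (h₁.1.1.1.add h₂.1.1.1) (h₁.2.1.add h₂.2.1) (n := 2 * N) (y := fun k => (k:ℝ) / N)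
    (fun i j hij => div_lt_div_of_pos_right (Nat.cast_lt.2 hij) hNR) fun k hk => by
      rw [mem_Icc, h₁.2.2.1, h₂.2.2.1, h₁.2.2.2, h₂.2.2.2, add_zero]
      refine ⟨by positivity, (div_le_iff₀ hNR).2 ?_⟩
      have : (k:ℝ) ≤ 2 * N := by exact_mod_cast hk
      linarith
  obtain ⟨p, q, hpath, hpq⟩ := exists_dtwPath_near hN (fun k hk => (hT k hk).2)
    (fun k hk => h₁.mapsTo (hT k hk).1) (fun k hk => h₂.mapsTo (hT k hk).1)
    (fun k hk => h₁.2.1 (hT k hk.le).1 (hT (k + 1) hk).1 (hTmono k hk))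
    (fun k hk => h₂.2.1 (hT k hk.le).1 (hT (k + 1) hk).1 (hTmono k hk))
  exact ⟨2 * N, p, q, hpath, dtwCost_le_warpCost_add hs hφ h₁ h₂ hN hT hTmono hpath hpq⟩

theorem CDTW_le_warpCost {s φ g₁ g₂ : ℝ → ℝ} (h₁ : InG g₁) (h₂ : InG g₂) :
    CDTW s φ ≤ warpCost s φ g₁ g₂ := by
  refine csInf_le ⟨0, ?_⟩ ⟨g₁, g₂, h₁, h₂, rfl⟩
  rintro _ ⟨g₁, g₂, h₁, h₂, rfl⟩
  exact intervalIntegral.integral_nonneg zero_le_one fun t ht => warpDensity_nonneg h₁ h₂ ht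

theorem DTWw_le_dtwCost {N L : ℕ} {sb fb : ℕ → ℝ} {p q : ℕ → ℕ} (h : DTWPath N L p q) :
    DTWw N sb fb ≤ dtwCost N sb fb L p q := by
  refine csInf_le ⟨0, ?_⟩ ⟨L, p, q, h, rfl⟩
  rintro _ ⟨L, p, q, -, rfl⟩
  exact Finset.sum_nonneg fun i _ => by positivity

section Discretization

variable {s φ : ℝ → ℝ} {Ks Kφ : ℝ≥0} {N : ℕ}

theorem DTWw_le_CDTW_add (hs : LipschitzOnWith Ks s (Icc 0 1))
    (hφ : LipschitzOnWith Kφ φ (Icc 0 1)) (hN : 0 < N) :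
    DTWw N (fun j => s (j / N)) (fun j => φ (j / N)) ≤ CDTW s φ + 4 * (Ks + Kφ) / N := by
  rw [← sub_le_iff_le_add]
  refine le_csInf ⟨_, _, _, InG.id, InG.id, rfl⟩ ?_
  rintro _ ⟨g₁, g₂, h₁, h₂, rfl⟩
  obtain ⟨L, p, q, hpath, hle⟩ := exists_dtwCost_le_warpCost hs hφ h₁ h₂ hN
  linarith [DTWw_le_dtwCost (sb := fun j => s (j / N)) (fb := fun j => φ (j / N)) hpath]

theorem CDTW_le_DTWw_add (hs : LipschitzOnWith Ks s (Icc 0 1))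
    (hφ : LipschitzOnWith Kφ φ (Icc 0 1)) (hN : 0 < N) :
    CDTW s φ ≤ DTWw N (fun j => s (j / N)) (fun j => φ (j / N)) + 2 * (Ks + Kφ) / N := by
  have hdiag : DTWPath N N id id := ⟨rfl, rfl, rfl, rfl, le_rfl, by omega,
    fun j _ => ⟨j.le_succ, le_rfl⟩, fun j _ => ⟨j.le_succ, le_rfl⟩⟩
  rw [← sub_le_iff_le_add]
  refine le_csInf ⟨_, N, id, id, hdiag, rfl⟩ ?_
  rintro _ ⟨L, p, q, hpath, rfl⟩
  obtain ⟨g₁, g₂, h₁, h₂, hle⟩ := exists_warpCost_le_dtwCost hs hφ hN hpath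
  change CDTW s φ - _ ≤ dtwCost N (fun j => s (j / N)) (fun j => φ (j / N)) L p q
  linarith [CDTW_le_warpCost (s := s) (φ := φ) h₁ h₂]

end Discretization

/-- CDTW is approximated by the weighted discrete DTW of the
discretizations `s̄(j) = s(j/N)`, `φ̄(j) = φ(j/N)`, for a fine enough step `Δ = 1/N`. -/
theorem CDTW_DTW_approx (s φ : ℝ → ℝ) (hs : C1FF s) (hφ : C1FF φ)
    (Ms Mφ : ℝ)
    (hMs : ∀ x ∈ Set.Icc (0:ℝ) 1, |deriv s x| ≤ Ms)
    (hMφ : ∀ x ∈ Set.Icc (0:ℝ) 1, |deriv φ x| ≤ Mφ) :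
    ∀ ε > 0, ∃ δ > 0, ∀ N : ℕ, 0 < N → (1 : ℝ) / N ≤ δ →
      |CDTW s φ - DTWw N (fun j => s ((j : ℝ) / N)) (fun j => φ ((j : ℝ) / N))| < ε := by
  intro ε hε
  have hLs := hs.1.lipschitzOnWith hMs
  have hLφ := hφ.1.lipschitzOnWith hMφ
  set K : ℝ := Ms.toNNReal + Mφ.toNNReal
  have hK : 0 ≤ K := by positivity
  refine ⟨ε / (4 * K + 1), by positivity, fun N hN hΔ => ?_⟩
  have hNR : (0:ℝ) < N := Nat.cast_pos.2 hN
  have herr : 4 * K / N < ε :=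
    calc 4 * K / N = 4 * K * (1 / N) := by ring
      _ ≤ 4 * K * (ε / (4 * K + 1)) := by gcongr
      _ < ε := by
        rw [mul_div_assoc', div_lt_iff₀ (by positivity)]
        nlinarith
  have h₁ := DTWw_le_CDTW_add hLs hLφ hN
  have h₂ := CDTW_le_DTWw_add hLs hLφ hN
  have h₃ : 2 * K / N ≤ 4 * K / N := by gcongr; linarith
  rw [abs_sub_lt_iff]
  constructor <;> linarith
end

section
/- Let s, φ ∈ C¹_FF([0,1]) and g₁, g₂ ∈ 𝒢 satisfy s∘g₁ = φ∘g₂. Then ∫₀¹ |s'(u)| du = ∫₀¹ |φ'(u)| du, i.e., ‖s'‖₁ = ‖φ'‖₁. -/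
/-!
Both sides equal the total variation of the common path `s ∘ g₁ = φ ∘ g₂` on `[0,1]`: a
continuous nondecreasing surjection of `[0,1]` does not change the variation, and for a
function continuous on `[a,b]` and differentiable off a countable set the variation is
`∫⁻ |f'|`. The upper bound is the fundamental theorem of calculus on each interval of a
partition; for the lower bound, the variation function `V x = Var_{[a,x]} f` makes `V ± f`
monotone, so `|f'| ≤ V'` a.e. and `∫ V' ≤ V b - V a`. When the variation is infinite,
`normD1` is a non-integrable Bochner integral, hence `0` on both sides.
-/

open Set MeasureTheory

/-- `‖f'‖₁ = ∫₀¹ |f'(x)| dx`. -/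
noncomputable def normD1 (f : ℝ → ℝ) : ℝ := ∫ x in (0:ℝ)..1, |deriv f x|

open Filter Topology
open scoped ENNReal

theorem MonotoneOn.lintegral_enorm_deriv_le {g : ℝ → ℝ} {a b : ℝ} (hab : a ≤ b)
    (hg : MonotoneOn g (Icc a b)) :
    ∫⁻ x in Icc a b, ‖deriv g x‖ₑ ≤ ENNReal.ofReal (g b - g a) := by
  have hg' : MonotoneOn g (uIcc a b) := by rwa [uIcc_of_le hab]
  have hint : IntegrableOn (deriv g) (Icc a b) :=
    (intervalIntegrable_iff_integrableOn_Icc_of_le hab).mp hg'.intervalIntegrable_deriv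
  have hnonneg : ∀ x ∈ Ioo a b, 0 ≤ deriv g x := fun x hx => by
    rw [← derivWithin_of_mem_nhds (Icc_mem_nhds hx.1 hx.2)]
    exact hg.derivWithin_nonneg
  have hle : ∫ x in a..b, deriv g x ≤ g b - g a := by
    have hgab : 0 ≤ g b - g a := sub_nonneg.2 (hg (left_mem_Icc.2 hab) (right_mem_Icc.2 hab) hab)
    exact (uIcc_of_le hgab ▸ hg'.intervalIntegral_deriv_mem_uIcc).2
  rw [← ofReal_integral_norm_eq_lintegral_enorm hint]
  refine ENNReal.ofReal_le_ofReal (le_of_eq_of_le ?_ hle)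
  rw [intervalIntegral.integral_of_le hab, ← restrict_Ioo_eq_restrict_Ioc,
    ← restrict_Ioo_eq_restrict_Icc]
  refine setIntegral_congr_fun measurableSet_Ioo fun x hx => ?_
  simp [abs_of_nonneg (hnonneg x hx)]

theorem lintegral_enorm_deriv_le_eVariationOn (f : ℝ → ℝ) (a b : ℝ) :
    ∫⁻ x in Icc a b, ‖deriv f x‖ₑ ≤ eVariationOn f (Icc a b) := by
  rcases lt_or_ge b a with hba | hab
  · simp [Icc_eq_empty_of_lt hba]
  by_cases hfin : eVariationOn f (Icc a b) = ⊤
  · simp [hfin]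
  have hf : LocallyBoundedVariationOn f (Icc a b) :=
    BoundedVariationOn.locallyBoundedVariationOn hfin
  have ha : a ∈ Icc a b := left_mem_Icc.2 hab
  set V := variationOnFromTo f (Icc a b) a
  have hV : MonotoneOn V (Icc a b) := variationOnFromTo.monotoneOn hf ha
  -- `V + f` and `V - f` are monotone, so `|f'| ≤ V'` wherever both are differentiable.
  have hae : ∀ᵐ x ∂volume.restrict (Icc a b), ‖deriv f x‖ₑ ≤ ‖deriv V x‖ₑ := by
    rw [← restrict_Ioo_eq_restrict_Icc, ae_restrict_iff' measurableSet_Ioo]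
    filter_upwards [hV.ae_differentiableWithinAt_of_mem, hf.ae_differentiableWithinAt_of_mem]
      with x hVx hfx hx
    have hnhds : Icc a b ∈ 𝓝 x := Icc_mem_nhds hx.1 hx.2
    have hVd := (hVx (Ioo_subset_Icc_self hx)).differentiableAt hnhds
    have hfd := (hfx (Ioo_subset_Icc_self hx)).differentiableAt hnhds
    have hadd : 0 ≤ deriv V x + deriv f x := by
      rw [← deriv_add hVd hfd, ← derivWithin_of_mem_nhds hnhds]
      exact (variationOnFromTo.add_self_monotoneOn hf ha).derivWithin_nonneg
    have hsub : 0 ≤ deriv V x - deriv f x := by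
      rw [← deriv_sub hVd hfd, ← derivWithin_of_mem_nhds hnhds]
      exact (variationOnFromTo.sub_self_monotoneOn hf ha).derivWithin_nonneg
    rw [enorm_le_iff_norm_le, Real.norm_eq_abs, Real.norm_eq_abs]
    exact abs_le_abs (by linarith) (by linarith)
  calc ∫⁻ x in Icc a b, ‖deriv f x‖ₑ ≤ ∫⁻ x in Icc a b, ‖deriv V x‖ₑ := lintegral_mono_ae hae
    _ ≤ ENNReal.ofReal (V b - V a) := hV.lintegral_enorm_deriv_le hab
    _ = eVariationOn f (Icc a b) := by
      simp only [V, variationOnFromTo.self, sub_zero, variationOnFromTo.eq_of_le f _ hab,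
        inter_self, ENNReal.ofReal_toReal hfin]

theorem edist_le_lintegral_enorm_deriv {f : ℝ → ℝ} {a b : ℝ} {S : Set ℝ} (hab : a ≤ b)
    (hS : S.Countable) (hf : ContinuousOn f (Icc a b))
    (hd : ∀ x ∈ Ioo a b \ S, DifferentiableAt ℝ f x) :
    edist (f a) (f b) ≤ ∫⁻ x in Ioc a b, ‖deriv f x‖ₑ := by
  by_cases hfin : ∫⁻ x in Ioc a b, ‖deriv f x‖ₑ = ⊤
  · simp [hfin]
  have hint : IntervalIntegrable (deriv f) volume a b :=
    (intervalIntegrable_iff_integrableOn_Ioc_of_le hab).2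
      ⟨(measurable_deriv f).aestronglyMeasurable, lt_top_iff_ne_top.2 hfin⟩
  have hftc := integral_eq_of_hasDerivAt_off_countable_of_le f (deriv f) hab hS hf
    (fun x hx => (hd x hx).hasDerivAt) hint
  rw [edist_comm, edist_eq_enorm_sub, ← hftc, intervalIntegral.integral_of_le hab]
  exact enorm_integral_le_lintegral_enorm _

theorem sum_setLIntegral_Ioc {μ : Measure ℝ} {F : ℝ → ℝ≥0∞} {u : ℕ → ℝ} (hu : Monotone u)
    (n : ℕ) :
    ∑ i ∈ Finset.range n, ∫⁻ x in Ioc (u i) (u (i + 1)), F x ∂μ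
      = ∫⁻ x in Ioc (u 0) (u n), F x ∂μ := by
  induction n with
  | zero => simp
  | succ n ih =>
    rw [Finset.sum_range_succ, ih,
      ← lintegral_union measurableSet_Ioc (Ioc_disjoint_Ioc_of_le le_rfl),
      Ioc_union_Ioc_eq_Ioc (hu n.zero_le) (hu n.le_succ)]

theorem eVariationOn_le_lintegral_enorm_deriv {f : ℝ → ℝ} {a b : ℝ} {S : Set ℝ}
    (hS : S.Countable) (hf : ContinuousOn f (Icc a b))
    (hd : ∀ x ∈ Ioo a b \ S, DifferentiableAt ℝ f x) :
    eVariationOn f (Icc a b) ≤ ∫⁻ x in Icc a b, ‖deriv f x‖ₑ := by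
  refine iSup_le fun ⟨n, u, hu, hus⟩ => ?_
  calc ∑ i ∈ Finset.range n, edist (f (u (i + 1))) (f (u i))
      ≤ ∑ i ∈ Finset.range n, ∫⁻ x in Ioc (u i) (u (i + 1)), ‖deriv f x‖ₑ := by
        refine Finset.sum_le_sum fun i _ => ?_
        rw [edist_comm]
        exact edist_le_lintegral_enorm_deriv (hu i.le_succ) hS
          (hf.mono (Icc_subset_Icc (hus i).1 (hus (i + 1)).2))
          fun x hx => hd x ⟨Ioo_subset_Ioo (hus i).1 (hus (i + 1)).2 hx.1, hx.2⟩
    _ = ∫⁻ x in Ioc (u 0) (u n), ‖deriv f x‖ₑ := sum_setLIntegral_Ioc hu n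
    _ ≤ ∫⁻ x in Icc a b, ‖deriv f x‖ₑ :=
        lintegral_mono_set fun x hx => ⟨(hus 0).1.trans hx.1.le, hx.2.trans (hus n).2⟩

theorem eVariationOn_Icc_eq_lintegral_enorm_deriv {f : ℝ → ℝ} {a b : ℝ} {S : Set ℝ}
    (hS : S.Countable) (hf : ContinuousOn f (Icc a b))
    (hd : ∀ x ∈ Ioo a b \ S, DifferentiableAt ℝ f x) :
    eVariationOn f (Icc a b) = ∫⁻ x in Icc a b, ‖deriv f x‖ₑ :=
  le_antisymm (eVariationOn_le_lintegral_enorm_deriv hS hf hd)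
    (lintegral_enorm_deriv_le_eVariationOn f a b)

theorem PiecewiseC1.normD1_eq_toReal_eVariationOn {f : ℝ → ℝ} (hf : PiecewiseC1 f) :
    normD1 f = (eVariationOn f (Icc 0 1)).toReal := by
  obtain ⟨hcont, S, hd, -⟩ := hf
  rw [eVariationOn_Icc_eq_lintegral_enorm_deriv S.countable_toSet hcont
      fun x hx => hd x ⟨Ioo_subset_Icc_self hx.1, hx.2⟩,
    ← restrict_Ioc_eq_restrict_Icc,
    ← integral_norm_eq_lintegral_enorm (measurable_deriv f).aestronglyMeasurable, normD1,
    intervalIntegral.integral_of_le zero_le_one]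
  rfl

theorem InG.eVariationOn_comp {g : ℝ → ℝ} (hg : InG g) (f : ℝ → ℝ) :
    eVariationOn (f ∘ g) (Icc 0 1) = eVariationOn f (Icc 0 1) := by
  obtain ⟨⟨⟨hcont, -⟩, -⟩, hmono, h0, h1⟩ := hg
  rw [eVariationOn.comp_eq_of_monotoneOn f g hmono,
    hcont.image_Icc_of_monotoneOn zero_le_one hmono, h0, h1]

/-- if `s ∘ g₁ = φ ∘ g₂` on `[0,1]` for `g₁, g₂ ∈ 𝒢`, then
`‖s'‖₁ = ‖φ'‖₁`. -/
theorem normD1_eq_of_match (s φ g₁ g₂ : ℝ → ℝ)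
    (hs : C1FF s) (hφ : C1FF φ) (hg₁ : InG g₁) (hg₂ : InG g₂)
    (hmatch : ∀ t ∈ Set.Icc (0:ℝ) 1, s (g₁ t) = φ (g₂ t)) :
    normD1 s = normD1 φ := by
  have hvar : eVariationOn s (Icc 0 1) = eVariationOn φ (Icc 0 1) := by
    rw [← hg₁.eVariationOn_comp s, ← hg₂.eVariationOn_comp φ]
    exact eVariationOn.eq_of_eqOn hmatch
  rw [hs.1.normD1_eq_toReal_eVariationOn, hφ.1.normD1_eq_toReal_eVariationOn, hvar]
end

section
/- Let s, φ ∈ C¹_FF([0,1]) with ‖s'‖₁ > 0 and ‖φ'‖₁ > 0, and let g₁, g₂ ∈ 𝒢 satisfy s∘g₁ = φ∘g₂. Then for all u ∈ [0,1], F_s(g₁(u)) = F_φ(g₂(u)), where F_s and F_φ are the cumulative distribution functions of the normalized densities |s'|/‖s'‖₁ and |φ'|/‖φ'‖₁ respectively. -/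
/-!
For a non-decreasing warp `g`, the monotone change of variables gives
`∫₀^{g u} |s'| = ∫₀^u g' · |s' ∘ g|`, and `g' · |s' ∘ g| = |(s ∘ g)'|` almost everywhere: off the
points where `s` is not differentiable this is the chain rule, and the preimage of each such point
is an interval, on whose interior `g` and `s ∘ g` are locally constant while its endpoints are
negligible. Hence both cumulative masses in the statement equal `∫₀^u |(s ∘ g₁)'|`, computed from
the common path `s ∘ g₁ = φ ∘ g₂`, and `u = 1` identifies the two normalizing constants.
-/

open Set MeasureTheory

/-- CDF of the normalized density `|f'| / ‖f'‖₁`. -/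
noncomputable def cdfOf (f : ℝ → ℝ) (t : ℝ) : ℝ :=
  (normD1 f)⁻¹ * ∫ x in (0:ℝ)..t, |deriv f x|

open Filter Topology

theorem ae_eq_of_subset_of_countable_sdiff {α : Type*} [MeasurableSpace α] {μ : Measure α}
    [NullSingletonClass μ] {A B : Set α} (hAB : A ⊆ B) (h : (B \ A).Countable) :
    A =ᵐ[μ] B :=
  ae_eq_set.2 ⟨by simp [sdiff_eq_empty.2 hAB], h.measure_zero μ⟩

theorem MonotoneOn.countable_setOf_not_eventuallyEq_of_mem {g : ℝ → ℝ} {s S : Set ℝ}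
    (hs : s.OrdConnected) (hg : MonotoneOn g s) (hS : S.Countable) :
    {x ∈ s | g x ∈ S ∧ ¬ g =ᶠ[𝓝 x] fun _ => g x}.Countable := by
  refine (hS.biUnion fun c _ => (s ∩ g ⁻¹' {c}).finite_sdiff_iUnion_Ioo.countable).mono ?_
  rintro x ⟨hxs, hxS, hx⟩
  refine Set.mem_biUnion hxS ⟨⟨hxs, rfl⟩, fun hmem => hx ?_⟩
  simp only [mem_iUnion] at hmem
  obtain ⟨y, ⟨hys, hy⟩, z, ⟨hzs, hz⟩, hxyz⟩ := hmem
  filter_upwards [Ioo_mem_nhds hxyz.1 hxyz.2] with t ht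
  have hts : t ∈ s := hs.out hys hzs (Ioo_subset_Icc_self ht)
  exact le_antisymm (hz ▸ hg hts hzs ht.2.le) (hy ▸ hg hys hts ht.1.le)

section MonotoneWarp

variable {g : ℝ → ℝ} {a b : ℝ} {S : Set ℝ}

theorem integral_deriv_smul_comp_of_monotoneOn {E : Type*} [NormedAddCommGroup E]
    [NormedSpace ℝ E] (hab : a ≤ b) (hS : S.Countable) (hcont : ContinuousOn g (Icc a b))
    (hmono : MonotoneOn g (Icc a b)) (hg : ∀ x ∈ Ioo a b \ S, DifferentiableAt ℝ g x)
    (f : ℝ → E) :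
    ∫ x in a..b, deriv g x • f (g x) = ∫ y in g a..g b, f y := by
  set T := Ioo a b \ S
  have hTsub : T ⊆ Icc a b := sdiff_subset.trans Ioo_subset_Icc_self
  have hbad : (Icc a b \ T).Countable := by
    refine ((hS.insert b).insert a).mono fun x ⟨hx, hxT⟩ => ?_
    by_contra h
    simp only [mem_insert_iff, not_or] at h
    exact hxT ⟨⟨lt_of_le_of_ne hx.1 (Ne.symm h.1), lt_of_le_of_ne hx.2 h.2.1⟩, h.2.2⟩
  have hT : T =ᵐ[volume] Ioc a b :=
    ae_eq_of_subset_of_countable_sdiff (sdiff_subset.trans Ioo_subset_Ioc_self)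
      (hbad.mono (sdiff_subset_sdiff_left Ioc_subset_Icc_self))
  have himage : g '' T =ᵐ[volume] Ioc (g a) (g b) := by
    refine EventuallyEq.trans ?_ Ioc_ae_eq_Icc.symm
    rw [← hcont.image_Icc_of_monotoneOn hab hmono]
    refine ae_eq_of_subset_of_countable_sdiff (image_mono hTsub) ((hbad.image g).mono ?_)
    rintro _ ⟨⟨x, hx, rfl⟩, hxT⟩
    exact mem_image_of_mem g ⟨hx, fun h => hxT (mem_image_of_mem g h)⟩
  have hderiv : ∀ x ∈ T, HasDerivWithinAt g (deriv g x) T x := fun x hx =>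
    (hg x hx).hasDerivAt.hasDerivWithinAt
  calc ∫ x in a..b, deriv g x • f (g x)
      = ∫ x in T, deriv g x • f (g x) := by
        rw [intervalIntegral.integral_of_le hab]; exact setIntegral_congr_set hT.symm
    _ = ∫ y in g '' T, f y :=
        (integral_image_eq_integral_deriv_smul_of_monotoneOn
          (measurableSet_Ioo.diff hS.measurableSet) hderiv (hmono.mono hTsub) f).symm
    _ = ∫ y in g a..g b, f y := by
        rw [intervalIntegral.integral_of_le (hmono (left_mem_Icc.2 hab) (right_mem_Icc.2 hab) hab)]
        exact setIntegral_congr_set himage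

theorem ae_abs_deriv_comp_eq_of_monotoneOn {s : ℝ → ℝ} {Sg : Set ℝ} (hS : S.Countable)
    (hSg : Sg.Countable) (hmono : MonotoneOn g (Icc a b))
    (hg : ∀ x ∈ Ioo a b \ Sg, DifferentiableAt ℝ g x)
    (hs : ∀ y ∈ Icc (g a) (g b) \ S, DifferentiableAt ℝ s y) :
    ∀ᵐ x, x ∈ Ioo a b → |deriv (s ∘ g) x| = deriv g x * |deriv s (g x)| := by
  filter_upwards [hSg.ae_notMem volume,
    (hmono.countable_setOf_not_eventuallyEq_of_mem ordConnected_Icc hS).ae_notMem volume]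
    with x hxSg hxlevel hx
  have hxI : x ∈ Icc a b := Ioo_subset_Icc_self hx
  by_cases hgxS : g x ∈ S
  · have hconst : g =ᶠ[𝓝 x] fun _ => g x := by
      by_contra h
      exact hxlevel ⟨hxI, hgxS, h⟩
    rw [(hconst.fun_comp s).deriv_eq, hconst.deriv_eq]
    simp [Function.comp_def]
  · have hgx : DifferentiableAt ℝ g x := hg x ⟨hx, hxSg⟩
    have hsgx : DifferentiableAt ℝ s (g x) :=
      hs _ ⟨⟨hmono (left_mem_Icc.2 (hxI.1.trans hxI.2)) hxI hxI.1,
        hmono hxI (right_mem_Icc.2 (hxI.1.trans hxI.2)) hxI.2⟩, hgxS⟩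
    have hg'_nonneg : 0 ≤ deriv g x := by
      rw [← derivWithin_of_mem_nhds (Icc_mem_nhds hx.1 hx.2)]
      exact hmono.derivWithin_nonneg
    rw [deriv_comp x hsgx hgx, abs_mul, abs_of_nonneg hg'_nonneg, mul_comm]

theorem integral_abs_deriv_comp_of_monotoneOn {s : ℝ → ℝ} {Sg : Set ℝ} (hab : a ≤ b)
    (hS : S.Countable) (hSg : Sg.Countable) (hcont : ContinuousOn g (Icc a b))
    (hmono : MonotoneOn g (Icc a b)) (hg : ∀ x ∈ Ioo a b \ Sg, DifferentiableAt ℝ g x)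
    (hs : ∀ y ∈ Icc (g a) (g b) \ S, DifferentiableAt ℝ s y) :
    ∫ x in a..b, |deriv (s ∘ g) x| = ∫ y in g a..g b, |deriv s y| := by
  rw [← integral_deriv_smul_comp_of_monotoneOn hab hSg hcont hmono hg,
    intervalIntegral.integral_of_le hab, intervalIntegral.integral_of_le hab,
    integral_Ioc_eq_integral_Ioo, integral_Ioc_eq_integral_Ioo]
  exact setIntegral_congr_ae measurableSet_Ioo
    (ae_abs_deriv_comp_eq_of_monotoneOn hS hSg hmono hg hs)

end MonotoneWarp

theorem InG.integral_abs_deriv_comp {s g : ℝ → ℝ} (hs : PiecewiseC1 s) (hg : InG g) {u : ℝ}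
    (hu : u ∈ Icc (0:ℝ) 1) :
    ∫ x in (0:ℝ)..u, |deriv (s ∘ g) x| = ∫ y in (0:ℝ)..g u, |deriv s y| := by
  obtain ⟨⟨⟨hgcont, Sg, hgdiff, -⟩, -⟩, hgmono, hg0, hg1⟩ := hg
  obtain ⟨-, S, hsdiff, -⟩ := hs
  have hsub : Icc 0 u ⊆ Icc (0:ℝ) 1 := Icc_subset_Icc_right hu.2
  nth_rw 2 [← hg0]
  refine integral_abs_deriv_comp_of_monotoneOn hu.1 S.countable_toSet Sg.countable_toSet
    (hgcont.mono hsub) (hgmono.mono hsub)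
    (fun x hx => hgdiff x ⟨Ioo_subset_Icc_self.trans hsub hx.1, hx.2⟩) fun y hy => hsdiff y ?_
  have hgu : g u ≤ 1 := hg1 ▸ hgmono hu (right_mem_Icc.2 zero_le_one) hu.2
  exact ⟨⟨hg0 ▸ hy.1.1, hy.1.2.trans hgu⟩, hy.2⟩

theorem cdf_match_general (s φ g₁ g₂ : ℝ → ℝ)
    (hs : C1FF s) (hφ : C1FF φ)
    (hg₁ : InG g₁) (hg₂ : InG g₂)
    (hmatch : ∀ t ∈ Set.Icc (0:ℝ) 1, s (g₁ t) = φ (g₂ t)) :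
    ∀ u ∈ Set.Icc (0:ℝ) 1, cdfOf s (g₁ u) = cdfOf φ (g₂ u) := by
  have hderiv : ∀ x ∈ Ioo (0:ℝ) 1, deriv (s ∘ g₁) x = deriv (φ ∘ g₂) x := fun x hx =>
    EventuallyEq.deriv_eq (eventually_of_mem (Icc_mem_nhds hx.1 hx.2) hmatch)
  have hmass : ∀ u ∈ Icc (0:ℝ) 1,
      ∫ y in (0:ℝ)..g₁ u, |deriv s y| = ∫ y in (0:ℝ)..g₂ u, |deriv φ y| := by
    intro u hu
    rw [← hg₁.integral_abs_deriv_comp hs.1 hu, ← hg₂.integral_abs_deriv_comp hφ.1 hu,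
      intervalIntegral.integral_of_le hu.1, intervalIntegral.integral_of_le hu.1,
      integral_Ioc_eq_integral_Ioo, integral_Ioc_eq_integral_Ioo]
    exact setIntegral_congr_fun measurableSet_Ioo fun x hx => by
      rw [hderiv x ⟨hx.1, hx.2.trans_le hu.2⟩]
  have hnorm : normD1 s = normD1 φ := by
    simpa only [normD1, hg₁.2.2.2, hg₂.2.2.2] using hmass 1 (right_mem_Icc.2 zero_le_one)
  intro u hu
  rw [cdfOf, cdfOf, hnorm, hmass u hu]

/-- if `s ∘ g₁ = φ ∘ g₂` on `[0,1]` for `g₁, g₂ ∈ 𝒢`, then the CDFs of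
the normalized densities satisfy `F_s (g₁ u) = F_φ (g₂ u)` for all `u ∈ [0,1]`. -/
theorem cdf_match (s φ g₁ g₂ : ℝ → ℝ)
    (hs : C1FF s) (hφ : C1FF φ) (hns : 0 < normD1 s) (hnφ : 0 < normD1 φ)
    (hg₁ : InG g₁) (hg₂ : InG g₂)
    (hmatch : ∀ t ∈ Set.Icc (0:ℝ) 1, s (g₁ t) = φ (g₂ t)) :
    ∀ u ∈ Set.Icc (0:ℝ) 1, cdfOf s (g₁ u) = cdfOf φ (g₂ u) :=
  cdf_match_general s φ g₁ g₂ hs hφ hg₁ hg₂ hmatch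
end

section
/- Let s, φ ∈ C¹_FF([0,1]) with ‖s'‖₁ > 0 and ‖φ'‖₁ > 0. If there exist g₁, g₂ ∈ 𝒢 such that s∘g₁ = φ∘g₂, then d_T(s,φ) = 0. -/
/-! Let `V_f(u) = ∫₀ᵘ |f'|`. Off a finite set of times, `V_s ∘ g₁` and `V_φ ∘ g₂` both have
derivative `|(s ∘ g₁)'| = |(φ ∘ g₂)'|`, and both vanish at `0`, so they coincide; at `t = 1`
this gives `‖s'‖₁ = ‖φ'‖₁`, hence `F_s ∘ g₁ = F_φ ∘ g₂`. Every `x ∈ [0,1]` is some `g₁ t`, and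
the transport map sends it to `y' = F_φ†(F_φ(g₂ t)) ≥ g₂ t` with `F_φ(y') = F_φ(g₂ t)`. So `φ` has
zero variation on `[g₂ t, y']`, whence `φ(y') = φ(g₂ t) = s(x)` and the integrand of `d_T`
vanishes identically. -/

open Set MeasureTheory

/-- Generalized inverse of `F : [a,b] → ℝ` : `F†(y) = inf {x ∈ [a,b] | F x > y}`,
with `inf ∅ = b` (implemented by adjoining `{b}`). -/
noncomputable def genInv (a b : ℝ) (F : ℝ → ℝ) (y : ℝ) : ℝ :=
  sInf ({x ∈ Set.Icc a b | y < F x} ∪ {b})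

/-- The optimal transport map `g = F_φ† ∘ F_s` between `|s'|/‖s'‖₁` and `|φ'|/‖φ'‖₁`. -/
noncomputable def transportMap (s φ : ℝ → ℝ) (x : ℝ) : ℝ :=
  genInv 0 1 (cdfOf φ) (cdfOf s x)

/-- The transport divergence `d_T`. -/
noncomputable def dT (s φ : ℝ → ℝ) : ℝ :=
  Real.sqrt (∫ x in (0:ℝ)..1,
    |s x - φ (transportMap s φ x)| ^ 2 * Real.sqrt (deriv (transportMap s φ) x))

open Filter Topology

-- `normD1 f = variationUpTo f 1` and `cdfOf f u = (normD1 f)⁻¹ * variationUpTo f u` hold by `rfl`.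
noncomputable def variationUpTo (f : ℝ → ℝ) (u : ℝ) : ℝ := ∫ x in (0:ℝ)..u, |deriv f x|

theorem eq_of_hasDerivAt_zero_off_countable {f : ℝ → ℝ} {a b : ℝ} {E : Set ℝ} (hab : a ≤ b)
    (hE : E.Countable) (hf : ContinuousOn f (Icc a b))
    (hd : ∀ x ∈ Ioo a b \ E, HasDerivAt f 0 x) : f b = f a := by
  have h := integral_eq_of_hasDerivAt_off_countable_of_le f (fun _ => (0:ℝ)) hab hE hf hd
    intervalIntegrable_const
  rw [intervalIntegral.integral_zero] at h
  linarith

theorem MonotoneOn.nonneg_of_hasDerivAt {g : ℝ → ℝ} {a b t d : ℝ}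
    (hg : MonotoneOn g (Icc a b)) (ht : t ∈ Ioo a b) (hd : HasDerivAt g d t) : 0 ≤ d :=
  (hd.hasDerivWithinAt (s := Ioo a b ∩ univ)).nonneg_of_monotoneOn
    ((PerfectSpace.univ_preperfect t (mem_univ t)).nhds_inter (isOpen_Ioo.mem_nhds ht))
    (hg.mono (inter_subset_left.trans Ioo_subset_Icc_self))

-- Level sets of a monotone function are intervals.
theorem MonotoneOn.eventually_eq_of_ne_csInf_of_ne_csSup {g : ℝ → ℝ} {a b t : ℝ}
    (hg : MonotoneOn g (Icc a b)) (ht : t ∈ Icc a b)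
    (hinf : t ≠ sInf {w ∈ Icc a b | g w = g t}) (hsup : t ≠ sSup {w ∈ Icc a b | g w = g t}) :
    ∀ᶠ u in 𝓝 t, g u = g t := by
  set L := {w ∈ Icc a b | g w = g t}
  have htL : t ∈ L := ⟨ht, rfl⟩
  have hbdd : BddBelow L := ⟨a, fun w hw => hw.1.1⟩
  have hbdd' : BddAbove L := ⟨b, fun w hw => hw.1.2⟩
  have hord : L.OrdConnected := ⟨fun x hx y hy z hz => by
    have hzI : z ∈ Icc a b := ⟨hx.1.1.trans hz.1, hz.2.trans hy.1.2⟩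
    exact ⟨hzI, le_antisymm (hy.2 ▸ hg hzI hy.1 hz.2) (hx.2 ▸ hg hx.1 hzI hz.1)⟩⟩
  have hnhds : Ioo (sInf L) (sSup L) ∈ 𝓝 t :=
    Ioo_mem_nhds ((csInf_le hbdd htL).lt_of_ne (Ne.symm hinf))
      ((le_csSup hbdd' htL).lt_of_ne hsup)
  filter_upwards [hnhds] with u hu
  exact (IsConnected.Ioo_csInf_csSup_subset ⟨⟨t, htL⟩, hord.isPreconnected⟩ hbdd hbdd' hu).2

theorem PiecewiseC1.exists_finite_exceptional {f : ℝ → ℝ} (hf : PiecewiseC1 f) :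
    ∃ S : Set ℝ, S.Finite ∧ ∀ x ∈ Ioo 0 1 \ S,
      HasDerivAt f (deriv f x) x ∧ ContinuousAt (deriv f) x := by
  obtain ⟨-, S, hd, hc⟩ := hf
  refine ⟨S, S.finite_toSet, fun x hx => ⟨(hd x ⟨Ioo_subset_Icc_self hx.1, hx.2⟩).hasDerivAt, ?_⟩⟩
  exact hc.continuousAt (inter_mem (Icc_mem_nhds hx.1.1 hx.1.2)
    (S.finite_toSet.isClosed.isOpen_compl.mem_nhds hx.2))

theorem InG.mapsTo_s10 {g : ℝ → ℝ} (hg : InG g) : MapsTo g (Icc 0 1) (Icc 0 1) := by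
  obtain ⟨-, hm, h0, h1⟩ := hg
  simpa only [h0, h1] using hm.mapsTo_Icc

theorem InG.surjOn {g : ℝ → ℝ} (hg : InG g) : SurjOn g (Icc 0 1) (Icc 0 1) := by
  obtain ⟨⟨⟨hc, -⟩, -⟩, -, h0, h1⟩ := hg
  have h := intermediate_value_Icc zero_le_one hc
  rwa [h0, h1] at h

section variationUpTo

variable {f : ℝ → ℝ}

theorem intervalIntegrable_abs_deriv_of_normD1_pos (hf : 0 < normD1 f) :
    IntervalIntegrable (fun x => |deriv f x|) volume 0 1 := by
  by_contra h
  rw [normD1, intervalIntegral.integral_undef h] at hf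
  exact hf.false

theorem continuousOn_variationUpTo (hint : IntervalIntegrable (fun x => |deriv f x|) volume 0 1) :
    ContinuousOn (variationUpTo f) (Icc 0 1) := by
  have h := intervalIntegral.continuousOn_primitive_interval' hint left_mem_uIcc
  rwa [uIcc_of_le zero_le_one] at h

theorem variationUpTo_sub (hint : IntervalIntegrable (fun x => |deriv f x|) volume 0 1)
    {u v : ℝ} (hu : u ∈ Icc (0:ℝ) 1) (hv : v ∈ Icc (0:ℝ) 1) :
    variationUpTo f v - variationUpTo f u = ∫ x in u..v, |deriv f x| := by
  have hsub : ∀ w ∈ Icc (0:ℝ) 1, IntervalIntegrable (fun x => |deriv f x|) volume 0 w :=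
    fun w hw => hint.mono_set <| uIcc_subset_uIcc left_mem_uIcc <| by rwa [uIcc_of_le zero_le_one]
  exact intervalIntegral.integral_interval_sub_left (hsub v hv) (hsub u hu)

theorem monotoneOn_variationUpTo (hint : IntervalIntegrable (fun x => |deriv f x|) volume 0 1) :
    MonotoneOn (variationUpTo f) (Icc 0 1) := fun _ hu _ hv huv =>
  sub_nonneg.mp <| variationUpTo_sub hint hu hv ▸
    intervalIntegral.integral_nonneg huv fun _ _ => abs_nonneg _

theorem hasDerivAt_variationUpTo (hint : IntervalIntegrable (fun x => |deriv f x|) volume 0 1)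
    {x : ℝ} (hx : x ∈ Ioo (0:ℝ) 1) (hc : ContinuousAt (deriv f) x) :
    HasDerivAt (variationUpTo f) |deriv f x| x :=
  intervalIntegral.integral_hasDerivAt_right
    (hint.mono_set <| uIcc_subset_uIcc left_mem_uIcc <| by
      rw [uIcc_of_le zero_le_one]; exact Ioo_subset_Icc_self hx)
    (measurable_deriv f).abs.stronglyMeasurable.stronglyMeasurableAtFilter hc.abs

-- `|f'|` vanishes at every continuity point of `f'` where `variationUpTo f` is flat.
theorem eq_of_variationUpTo_eq (hint : IntervalIntegrable (fun x => |deriv f x|) volume 0 1)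
    (hf : PiecewiseC1 f) {u v : ℝ} (hu : u ∈ Icc (0:ℝ) 1) (hv : v ∈ Icc (0:ℝ) 1) (huv : u ≤ v)
    (h : variationUpTo f v = variationUpTo f u) :
    f v = f u := by
  obtain ⟨S, hS, hgood⟩ := hf.exists_finite_exceptional
  have hIcc : Icc u v ⊆ Icc 0 1 := Icc_subset_Icc hu.1 hv.2
  have hflat : ∀ w ∈ Icc u v, variationUpTo f w = variationUpTo f u := fun w hw =>
    le_antisymm (h ▸ monotoneOn_variationUpTo hint (hIcc hw) hv hw.2)
      (monotoneOn_variationUpTo hint hu (hIcc hw) hw.1)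
  refine eq_of_hasDerivAt_zero_off_countable huv hS.countable (hf.1.mono hIcc) ?_
  rintro z ⟨hz, hzS⟩
  have hz01 : z ∈ Ioo (0:ℝ) 1 := ⟨hu.1.trans_lt hz.1, hz.2.trans_le hv.2⟩
  obtain ⟨hdf, hcf⟩ := hgood z ⟨hz01, hzS⟩
  have hconst : HasDerivAt (variationUpTo f) 0 z :=
    (hasDerivAt_const z _).congr_of_eventuallyEq <| eventually_of_mem
      (Ioo_mem_nhds hz.1 hz.2) fun w hw => hflat w (Ioo_subset_Icc_self hw)
  rwa [abs_eq_zero.mp ((hasDerivAt_variationUpTo hint hz01 hcf).unique hconst)] at hdf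

/-- Where `g` takes an exceptional value of `f` the chain rule is unavailable, but off the
finitely many endpoints of those level sets `g` is locally constant. -/
theorem exists_finite_hasDerivAt_variationUpTo_comp {g : ℝ → ℝ}
    (hint : IntervalIntegrable (fun x => |deriv f x|) volume 0 1)
    (hf : PiecewiseC1 f) (hg : PiecewiseC1 g) (hgm : MonotoneOn g (Icc 0 1))
    (hg01 : MapsTo g (Icc 0 1) (Icc 0 1)) :
    ∃ E : Set ℝ, E.Finite ∧ ∀ t ∈ Ioo 0 1 \ E,
      HasDerivAt (variationUpTo f ∘ g) |deriv (f ∘ g) t| t := by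
  obtain ⟨S, hS, hfgood⟩ := hf.exists_finite_exceptional
  obtain ⟨T, hT, hggood⟩ := hg.exists_finite_exceptional
  set V : Set ℝ := S ∪ {0, 1}
  set L : ℝ → Set ℝ := fun v => {w ∈ Icc (0:ℝ) 1 | g w = v}
  refine ⟨T ∪ ⋃ v ∈ V, {sInf (L v), sSup (L v)},
    hT.union ((hS.union (toFinite _)).biUnion fun _ _ => toFinite _), ?_⟩
  rintro t ⟨ht, htE⟩
  simp only [mem_union, mem_iUnion, mem_insert_iff, mem_singleton_iff, exists_prop,
    not_or, not_exists, not_and] at htE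
  by_cases hgt : g t ∈ V
  · have hflat : ∀ᶠ u in 𝓝 t, g u = g t :=
      hgm.eventually_eq_of_ne_csInf_of_ne_csSup (Ioo_subset_Icc_self ht)
        (htE.2 _ hgt).1 (htE.2 _ hgt).2
    have hconst : ∀ F : ℝ → ℝ, F ∘ g =ᶠ[𝓝 t] fun _ => F (g t) :=
      fun F => hflat.mono fun u hu => by simp only [Function.comp_apply, hu]
    rw [(hconst f).deriv_eq, deriv_const, abs_zero]
    exact (hasDerivAt_const t _).congr_of_eventuallyEq (hconst _)
  · have hgt' : g t ∈ Ioo 0 1 \ S := by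
      obtain ⟨h0, h1⟩ := hg01 (Ioo_subset_Icc_self ht)
      simp only [V, mem_union, mem_insert_iff, mem_singleton_iff, not_or] at hgt
      exact ⟨⟨h0.lt_of_ne (Ne.symm hgt.2.1), h1.lt_of_ne hgt.2.2⟩, hgt.1⟩
    obtain ⟨hdf, hcf⟩ := hfgood _ hgt'
    have hdg := (hggood t ⟨ht, htE.1⟩).1
    rw [(hdf.comp t hdg).deriv, abs_mul, abs_of_nonneg (hgm.nonneg_of_hasDerivAt ht hdg)]
    exact (hasDerivAt_variationUpTo hint hgt'.1 hcf).comp t hdg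

end variationUpTo

theorem variationUpTo_comp_eq_of_comp_eqOn {s φ g₁ g₂ : ℝ → ℝ} (hs : PiecewiseC1 s)
    (hφ : PiecewiseC1 φ) (hints : IntervalIntegrable (fun x => |deriv s x|) volume 0 1)
    (hintφ : IntervalIntegrable (fun x => |deriv φ x|) volume 0 1) (hg₁ : InG g₁)
    (hg₂ : InG g₂) (hmatch : ∀ t ∈ Icc (0:ℝ) 1, s (g₁ t) = φ (g₂ t)) {t : ℝ}
    (ht : t ∈ Icc (0:ℝ) 1) : variationUpTo s (g₁ t) = variationUpTo φ (g₂ t) := by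
  obtain ⟨E₁, hE₁, hd₁⟩ :=
    exists_finite_hasDerivAt_variationUpTo_comp hints hs hg₁.1.1 hg₁.2.1 hg₁.mapsTo_s10
  obtain ⟨E₂, hE₂, hd₂⟩ :=
    exists_finite_hasDerivAt_variationUpTo_comp hintφ hφ hg₂.1.1 hg₂.2.1 hg₂.mapsTo_s10
  have hderiv : ∀ u ∈ Ioo (0:ℝ) 1, deriv (s ∘ g₁) u = deriv (φ ∘ g₂) u := fun u hu =>
    EventuallyEq.deriv_eq <| eventually_of_mem (Ioo_mem_nhds hu.1 hu.2)
      fun w hw => hmatch w (Ioo_subset_Icc_self hw)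
  have hcont : ContinuousOn (variationUpTo s ∘ g₁ - variationUpTo φ ∘ g₂) (Icc 0 1) :=
    ((continuousOn_variationUpTo hints).comp hg₁.1.1.1 hg₁.mapsTo_s10).sub
      ((continuousOn_variationUpTo hintφ).comp hg₂.1.1.1 hg₂.mapsTo_s10)
  have key := eq_of_hasDerivAt_zero_off_countable ht.1 (hE₁.union hE₂).countable
    (hcont.mono (Icc_subset_Icc le_rfl ht.2)) fun u ⟨hu, huE⟩ => by
      have hu01 : u ∈ Ioo (0:ℝ) 1 := ⟨hu.1, hu.2.trans_le ht.2⟩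
      simpa only [hderiv u hu01, sub_self] using
        (hd₁ u ⟨hu01, fun h => huE (Or.inl h)⟩).sub (hd₂ u ⟨hu01, fun h => huE (Or.inr h)⟩)
  simpa only [Pi.sub_apply, Function.comp_apply, hg₁.2.2.1, hg₂.2.2.1, variationUpTo,
    intervalIntegral.integral_same, sub_self, sub_eq_zero] using key

theorem genInv_apply_self {F : ℝ → ℝ} {a b y : ℝ} (hF : MonotoneOn F (Icc a b))
    (hFc : ContinuousOn F (Icc a b)) (hy : y ∈ Icc a b) :
    genInv a b F (F y) ∈ Icc y b ∧ F (genInv a b F (F y)) = F y := by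
  set T : Set ℝ := {x ∈ Icc a b | F y < F x} ∪ {b}
  set z := genInv a b F (F y)
  have hbT : b ∈ T := Or.inr rfl
  have hlower : ∀ x ∈ T, y ≤ x := by
    rintro x (⟨hx, hFx⟩ | rfl)
    · exact le_of_not_ge fun hxy => (hF hx hy hxy).not_gt hFx
    · exact hy.2
  have hbdd : BddBelow T := ⟨y, hlower⟩
  have hyz : y ≤ z := le_csInf ⟨b, hbT⟩ hlower
  have hzI : z ∈ Icc a b := ⟨hy.1.trans hyz, csInf_le hbdd hbT⟩
  refine ⟨⟨hyz, hzI.2⟩, le_antisymm (not_lt.mp fun hlt => ?_) (hF hy hzI hyz)⟩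
  rcases hyz.eq_or_lt with hyz' | hyz'
  · rw [← hyz'] at hlt
    exact hlt.false
  have hev : ∀ᶠ x in 𝓝[Ioo y z] z, F y < F x :=
    ((hFc z hzI).mono fun x hx => ⟨hy.1.trans hx.1.le, hx.2.le.trans hzI.2⟩).eventually
      (lt_mem_nhds hlt)
  have : (𝓝[Ioo y z] z).NeBot := by rw [nhdsWithin_Ioo_eq_nhdsLT hyz']; infer_instance
  obtain ⟨x, hFx, hx⟩ := (hev.and self_mem_nhdsWithin).exists
  exact (csInf_le hbdd (Or.inl ⟨⟨hy.1.trans hx.1.le, hx.2.le.trans hzI.2⟩, hFx⟩)).not_gt hx.2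

theorem apply_genInv_cdfOf_self {φ : ℝ → ℝ} (hφ : PiecewiseC1 φ) (hnφ : 0 < normD1 φ) {y : ℝ}
    (hy : y ∈ Icc (0:ℝ) 1) : φ (genInv 0 1 (cdfOf φ) (cdfOf φ y)) = φ y := by
  have hint := intervalIntegrable_abs_deriv_of_normD1_pos hnφ
  have hcdf : cdfOf φ = fun t => (normD1 φ)⁻¹ * variationUpTo φ t := rfl
  obtain ⟨hmem, hval⟩ := genInv_apply_self (F := cdfOf φ)
    (fun u hu v hv huv => mul_le_mul_of_nonneg_left (monotoneOn_variationUpTo hint hu hv huv)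
      (inv_nonneg.mpr hnφ.le))
    (hcdf ▸ (continuousOn_variationUpTo hint).const_smul (normD1 φ)⁻¹) hy
  exact eq_of_variationUpTo_eq hint hφ hy ⟨hy.1.trans hmem.1, hmem.2⟩ hmem.1
    (mul_left_cancel₀ (inv_ne_zero hnφ.ne') hval)

theorem dT_eq_zero_of_forall_eq {s φ : ℝ → ℝ}
    (h : ∀ x ∈ Icc (0:ℝ) 1, s x = φ (transportMap s φ x)) : dT s φ = 0 := by
  rw [dT, intervalIntegral.integral_congr (g := fun _ => 0) fun x hx => ?_,
    intervalIntegral.integral_zero, Real.sqrt_zero]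
  rw [uIcc_of_le zero_le_one] at hx
  simp only [← h x hx, sub_self, abs_zero]
  ring

/-- if `s ∘ g₁ = φ ∘ g₂` on `[0,1]` for some `g₁, g₂ ∈ 𝒢`, then
`d_T(s,φ) = 0`. -/
theorem dT_zero_of_match (s φ g₁ g₂ : ℝ → ℝ)
    (hs : C1FF s) (hφ : C1FF φ) (hns : 0 < normD1 s) (hnφ : 0 < normD1 φ)
    (hg₁ : InG g₁) (hg₂ : InG g₂)
    (hmatch : ∀ t ∈ Set.Icc (0:ℝ) 1, s (g₁ t) = φ (g₂ t)) :
    dT s φ = 0 := by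
  have hvar : ∀ t ∈ Icc (0:ℝ) 1, variationUpTo s (g₁ t) = variationUpTo φ (g₂ t) :=
    fun t ht => variationUpTo_comp_eq_of_comp_eqOn hs.1 hφ.1
      (intervalIntegrable_abs_deriv_of_normD1_pos hns)
      (intervalIntegrable_abs_deriv_of_normD1_pos hnφ) hg₁ hg₂ hmatch ht
  have hnorm : normD1 s = normD1 φ := by
    have h := hvar 1 (right_mem_Icc.2 zero_le_one)
    rwa [hg₁.2.2.2, hg₂.2.2.2] at h
  refine dT_eq_zero_of_forall_eq fun x hx => ?_
  obtain ⟨t, ht, rfl⟩ := hg₁.surjOn hx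
  have hcdf : cdfOf s (g₁ t) = cdfOf φ (g₂ t) := by
    rw [cdfOf, cdfOf, hnorm]
    exact congrArg _ (hvar t ht)
  rw [transportMap, hcdf, apply_genInv_cdfOf_self hφ.1 hnφ (hg₂.mapsTo_s10 ht), hmatch t ht]
end
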